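/- arXiv:2604.10354 — 4 statements merged into one kernel-verified Lean document; each statement's English description precedes it below -/
import Mathlib

section
/- For all integers p ≥ 2, d > 2, k ≥ 1 and n ≥ d−1, one has O(p,n,k,d−1) ≤ O(p,n,k,d). -/
open scoped BigOperators

/-- The largest `k` such that `C(k,t) ≤ a` (used in the greedy binomial expansion). -/
def maxBinomIdx (a t : ℕ) : ℕ :=
  ((Finset.range (a + t + 1)).filter fun k => Nat.choose k t ≤ a).sup id

/-- `a^{⟨t⟩}`, computed via the (unique, hence greedy) binomial expansion of `a` in base `t`:
if `a = C(k_t,t) + C(k_{t-1},t-1) + ⋯ + C(k_j,j)` with `k_t > ⋯ > k_j ≥ j ≥ 1`, then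
`a^{⟨t⟩} = C(k_t+1,t+1) + ⋯ + C(k_j+1,j+1)`; by convention `0^{⟨t⟩} = 0`. -/
def macaulay : ℕ → ℕ → ℕ
  | _, 0 => 0
  | a, t + 1 =>
    if a = 0 then 0
    else
      Nat.choose (maxBinomIdx a (t + 1) + 1) (t + 2) +
        macaulay (a - Nat.choose (maxBinomIdx a (t + 1)) (t + 1)) t

/-- A finite O-sequence: `h 0 = 1`, `h` vanishes after its first zero, `h` is eventually zero,
and `h (t+1) ≤ (h t)^{⟨t⟩}` for every `t ≥ 1`. -/
def IsFiniteOSeq (h : ℕ → ℕ) : Prop :=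
  h 0 = 1 ∧ (∀ t, h t = 0 → h (t + 1) = 0) ∧ (∃ N, ∀ t, N ≤ t → h t = 0) ∧
    ∀ t, 1 ≤ t → h (t + 1) ≤ macaulay (h t) t

/-- The multiplicity (length) `d = Σ_t h t` of a finite O-sequence. -/
noncomputable def mult (h : ℕ → ℕ) : ℕ := ∑ᶠ t, h t

/-- The socle degree `s = max {t : h t ≠ 0}` of a finite O-sequence. -/
noncomputable def socleDeg (h : ℕ → ℕ) : ℕ := sSup {t | h t ≠ 0}

/-- `countO p n k d = O(p,n,k,d)`: for `p ≥ 1`, `n ≥ 0`, `k ≥ 0`, `d ≥ 1`, the number of finite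
O-sequences `h` of multiplicity `d` and socle degree at most `n` with `h i = C(p-1+i,i)` for
`0 ≤ i ≤ k` and `h i < C(p-1+i,i)` for `i > k`; moreover `O(0,n,0,1) = 1` for `n ≥ 0`,
`O(0,n,k,d) = 0` for `k > 0` or `d > 1`, and `O(p,n,k,d) = 0` if `p < 0`, `n < 0`, `k < 0`
or `d ≤ 0`. -/
noncomputable def countO (p n k d : ℤ) : ℕ :=
  if 1 ≤ p ∧ 0 ≤ n ∧ 0 ≤ k ∧ 1 ≤ d then
    {h : ℕ → ℕ | IsFiniteOSeq h ∧ mult h = d.toNat ∧ socleDeg h ≤ n.toNat ∧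
        (∀ i : ℕ, (i : ℤ) ≤ k → h i = Nat.choose (p.toNat - 1 + i) i) ∧
        (∀ i : ℕ, k < (i : ℤ) → h i < Nat.choose (p.toNat - 1 + i) i)}.ncard
  else if p = 0 ∧ 0 ≤ n ∧ k = 0 ∧ d = 1 then 1
  else 0

/-- `O_d`: the number of finite O-sequences of multiplicity `d`. -/
noncomputable def countOd (d : ℕ) : ℕ :=
  {h : ℕ → ℕ | IsFiniteOSeq h ∧ mult h = d}.ncard

/-- `A_d`: the number of finite O-sequences of multiplicity `d` whose value at the socle degree
is at least `2`. -/
noncomputable def countAd (d : ℕ) : ℕ :=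
  {h : ℕ → ℕ | IsFiniteOSeq h ∧ mult h = d ∧ 2 ≤ h (socleDeg h)}.ncard

lemma macaulay_pos' {a t : ℕ} (ha : 1 ≤ a) (ht : 1 ≤ t) : 1 ≤ macaulay a t := by
  cases t with
  | zero => omega
  | succ t =>
    rw [macaulay, if_neg (by omega)]
    have h1 : t + 1 ≤ maxBinomIdx a (t + 1) := by
      apply Finset.le_sup (f := id)
      simp only [Finset.mem_filter, Finset.mem_range, Nat.choose_self]
      omega
    have := Nat.choose_pos (show t + 2 ≤ maxBinomIdx a (t + 1) + 1 by omega)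
    omega

lemma zero_tail' {h : ℕ → ℕ} (hz : ∀ t, h t = 0 → h (t + 1) = 0) {t u : ℕ}
    (h0 : h t = 0) (htu : t ≤ u) : h u = 0 := by
  induction u, htu using Nat.le_induction with
  | base => exact h0
  | succ n _ ih => exact hz n ih

lemma oseq_facts' {h : ℕ → ℕ} (hO : IsFiniteOSeq h) :
    h (socleDeg h) ≠ 0 ∧ (∀ t, socleDeg h < t → h t = 0) ∧
      (∀ t, t ≤ socleDeg h → h t ≠ 0) ∧ (∀ t, h t ≠ 0 → t ≤ socleDeg h) ∧
      mult h = ∑ i ∈ Finset.range (socleDeg h + 1), h i := by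
  obtain ⟨h0, hz, ⟨N, hN⟩, -⟩ := hO
  have hbdd : BddAbove {t | h t ≠ 0} := ⟨N, fun t ht => by
    by_contra hlt
    exact ht (hN t (by omega))⟩
  have hne : {t | h t ≠ 0}.Nonempty := ⟨0, by simp [h0]⟩
  have hmem : h (socleDeg h) ≠ 0 := Nat.sSup_mem hne hbdd
  have hub : ∀ t, h t ≠ 0 → t ≤ socleDeg h := fun t ht => le_csSup hbdd ht
  have hgt : ∀ t, socleDeg h < t → h t = 0 := by
    intro t ht
    by_contra h'
    exact absurd (hub t h') (by omega)
  have hle : ∀ t, t ≤ socleDeg h → h t ≠ 0 := by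
    intro t ht h'
    exact hmem (zero_tail' hz h' ht)
  refine ⟨hmem, hgt, hle, hub, ?_⟩
  rw [mult]
  apply finsum_eq_sum_of_support_subset
  intro t ht
  simp only [Function.mem_support] at ht
  simp only [Finset.coe_range, Set.mem_Iio]
  have := hub t ht
  omega
lemma key_lemma (pp nn : ℕ) (k : ℤ) (e : ℕ) (hpp : 2 ≤ pp) (hk : 1 ≤ k) (he : 2 ≤ e)
    (hne : e ≤ nn) :
    {h : ℕ → ℕ | IsFiniteOSeq h ∧ mult h = e ∧ socleDeg h ≤ nn ∧
        (∀ i : ℕ, (i : ℤ) ≤ k → h i = Nat.choose (pp - 1 + i) i) ∧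
        (∀ i : ℕ, k < (i : ℤ) → h i < Nat.choose (pp - 1 + i) i)}.ncard ≤
    {h : ℕ → ℕ | IsFiniteOSeq h ∧ mult h = e + 1 ∧ socleDeg h ≤ nn ∧
        (∀ i : ℕ, (i : ℤ) ≤ k → h i = Nat.choose (pp - 1 + i) i) ∧
        (∀ i : ℕ, k < (i : ℤ) → h i < Nat.choose (pp - 1 + i) i)}.ncard := by
  have hsoc : ∀ h : ℕ → ℕ, IsFiniteOSeq h →
      socleDeg (Function.update h (socleDeg h + 1) 1) = socleDeg h + 1 := by
    intro h hO
    obtain ⟨-, hgt, -, -, -⟩ := oseq_facts' hO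
    show sSup {t | Function.update h (socleDeg h + 1) 1 t ≠ 0} = socleDeg h + 1
    have hmem : socleDeg h + 1 ∈ {t | Function.update h (socleDeg h + 1) 1 t ≠ 0} := by
      simp
    have hbdd : BddAbove {t | Function.update h (socleDeg h + 1) 1 t ≠ 0} := by
      refine ⟨socleDeg h + 1, fun t ht => ?_⟩
      simp only [Set.mem_setOf_eq] at ht
      by_contra h'
      push_neg at h'
      rw [Function.update_of_ne (by omega)] at ht
      exact ht (hgt t (by omega))
    refine le_antisymm (csSup_le ⟨_, hmem⟩ (fun t ht => ?_)) (le_csSup hbdd hmem)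
    simp only [Set.mem_setOf_eq] at ht
    by_contra h'
    push_neg at h'
    rw [Function.update_of_ne (by omega)] at ht
    exact ht (hgt t (by omega))
  refine Set.ncard_le_ncard_of_injOn (fun h => Function.update h (socleDeg h + 1) 1) ?_ ?_ ?_
  · -- maps to
    intro h hmem
    simp only [Set.mem_setOf_eq] at hmem ⊢
    obtain ⟨hO, hmult, hsle, heq, hlt⟩ := hmem
    obtain ⟨hs0, hgt, hle, hub, hsum⟩ := oseq_facts' hO
    obtain ⟨h0, hz, hNex, hmac⟩ := id hO
    set s := socleDeg h with hsd
    have hks : k.toNat ≤ s := by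
      refine hub _ ?_
      rw [heq k.toNat (by omega)]
      exact (Nat.choose_pos (by omega)).ne'
    have hs1 : 1 ≤ s := by omega
    set g := Function.update h (s + 1) 1 with hg
    have hgat : ∀ t, t ≠ s + 1 → g t = h t := by
      intro t ht
      rw [hg]
      exact Function.update_of_ne ht _ _
    have hgs : g (s + 1) = 1 := by
      rw [hg]
      exact Function.update_self _ _ _
    have hgO : IsFiniteOSeq g := by
      refine ⟨by rw [hgat 0 (by omega)]; exact h0, ?_, ⟨s + 2, fun t ht => ?_⟩, ?_⟩
      · intro t ht
        rcases eq_or_ne t (s + 1) with rfl | hne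
        · rw [hgs] at ht; omega
        · rw [hgat t hne] at ht
          have hts : s < t := by
            by_contra hc
            exact hle t (by omega) ht
          rw [hgat (t + 1) (by omega)]
          exact hgt (t + 1) (by omega)
      · rw [hgat t (by omega)]
        exact hgt t (by omega)
      · intro t ht1
        rcases eq_or_ne t s with rfl | hts
        · rw [hgs, hgat s (by omega)]
          exact macaulay_pos' (Nat.pos_of_ne_zero hs0) hs1
        · rcases eq_or_ne t (s + 1) with rfl | hts1
          · rw [hgat (s + 2) (by omega), hgt (s + 2) (by omega)]
            exact Nat.zero_le _
          · rw [hgat (t + 1) (by omega), hgat t hts1]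
            exact hmac t ht1
    have hgsoc : socleDeg g = s + 1 := by
      rw [hg]
      exact hsoc h hO
    have hse : s + 1 ≤ e := by
      calc s + 1 = ∑ i ∈ Finset.range (s + 1), 1 := by simp
        _ ≤ ∑ i ∈ Finset.range (s + 1), h i :=
            Finset.sum_le_sum (fun i hi => Nat.one_le_iff_ne_zero.2
              (hle i (by simp only [Finset.mem_range] at hi; omega)))
        _ = e := by rw [← hsum, hmult]
    have hgsum : mult g = e + 1 := by
      obtain ⟨-, -, -, -, hsum2⟩ := oseq_facts' hgO
      rw [hsum2, hgsoc, Finset.sum_range_succ, hgs]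
      have hrest : ∑ i ∈ Finset.range (s + 1), g i = ∑ i ∈ Finset.range (s + 1), h i :=
        Finset.sum_congr rfl (fun i hi =>
          hgat i (by simp only [Finset.mem_range] at hi; omega))
      rw [hrest, ← hsum, hmult]
    refine ⟨hgO, hgsum, by rw [hgsoc]; omega, fun i hi => ?_, fun i hi => ?_⟩
    · rw [hgat i (by omega)]
      exact heq i hi
    · rcases eq_or_ne i (s + 1) with rfl | hne
      · rw [hgs]
        have h2 : 2 ≤ Nat.choose (s + 2) (s + 1) := by
          rw [Nat.choose_succ_self_right]; omega
        have h3 : Nat.choose (s + 2) (s + 1) ≤ Nat.choose (pp - 1 + (s + 1)) (s + 1) :=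
          Nat.choose_le_choose _ (by omega)
        omega
      · rw [hgat i hne]
        exact hlt i hi
  · -- injective
    rintro h1 ⟨hO1, -, -, -, -⟩ h2 ⟨hO2, -, -, -, -⟩ hfe
    have hfe' : Function.update h1 (socleDeg h1 + 1) 1 =
        Function.update h2 (socleDeg h2 + 1) 1 := hfe
    have hs12 : socleDeg h1 = socleDeg h2 := by
      have e1 := hsoc h1 hO1
      have e2 := hsoc h2 hO2
      have e3 := congrArg socleDeg hfe'
      rw [e1, e2] at e3
      omega
    obtain ⟨-, hgt1, -, -, -⟩ := oseq_facts' hO1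
    obtain ⟨-, hgt2, -, -, -⟩ := oseq_facts' hO2
    funext t
    rcases eq_or_ne t (socleDeg h1 + 1) with rfl | hne
    · rw [hgt1 _ (by omega), hgt2 _ (by omega)]
    · have hv := congrFun hfe' t
      rwa [Function.update_of_ne hne, Function.update_of_ne (by omega)] at hv
  · -- finite
    have hinj : Set.InjOn (fun (h : ℕ → ℕ) (i : Fin (nn + 1)) =>
        (⟨min (h i) (e + 1), by omega⟩ : Fin (e + 2)))
        {h : ℕ → ℕ | IsFiniteOSeq h ∧ mult h = e + 1 ∧ socleDeg h ≤ nn ∧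
          (∀ i : ℕ, (i : ℤ) ≤ k → h i = Nat.choose (pp - 1 + i) i) ∧
          (∀ i : ℕ, k < (i : ℤ) → h i < Nat.choose (pp - 1 + i) i)} := by
      rintro h1 ⟨hO1, hm1, hs1, -, -⟩ h2 ⟨hO2, hm2, hs2, -, -⟩ hfe
      obtain ⟨-, hgt1, -, -, hsum1⟩ := oseq_facts' hO1
      obtain ⟨-, hgt2, -, -, hsum2⟩ := oseq_facts' hO2
      have hbd1 : ∀ t, h1 t ≤ e + 1 := by
        intro t
        rcases le_or_gt t (socleDeg h1) with htle | htgt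
        · calc h1 t ≤ ∑ i ∈ Finset.range (socleDeg h1 + 1), h1 i :=
              Finset.single_le_sum (fun i _ => Nat.zero_le _)
                (Finset.mem_range.2 (by omega))
            _ = e + 1 := by rw [← hsum1, hm1]
        · rw [hgt1 t htgt]; omega
      have hbd2 : ∀ t, h2 t ≤ e + 1 := by
        intro t
        rcases le_or_gt t (socleDeg h2) with htle | htgt
        · calc h2 t ≤ ∑ i ∈ Finset.range (socleDeg h2 + 1), h2 i :=
              Finset.single_le_sum (fun i _ => Nat.zero_le _)
                (Finset.mem_range.2 (by omega))
            _ = e + 1 := by rw [← hsum2, hm2]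
        · rw [hgt2 t htgt]; omega
      funext t
      rcases le_or_gt t nn with htn | htn
      · have hvv : min (h1 t) (e + 1) = min (h2 t) (e + 1) :=
          congrArg Fin.val (congrFun hfe ⟨t, by omega⟩)
        have b1 := hbd1 t
        have b2 := hbd2 t
        omega
      · rw [hgt1 t (by omega), hgt2 t (by omega)]
    exact Set.Finite.of_finite_image (Set.toFinite _) hinj

/-- For all integers `p ≥ 2`, `d > 2`, `k ≥ 1` and `n ≥ d−1`,
`O(p,n,k,d−1) ≤ O(p,n,k,d)`. -/
theorem stmt0 (p n k d : ℤ) (hp : 2 ≤ p) (hd : 2 < d) (hk : 1 ≤ k) (hn : d - 1 ≤ n) :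
    countO p n k (d - 1) ≤ countO p n k d := by
  have hc1 : 1 ≤ p ∧ 0 ≤ n ∧ 0 ≤ k ∧ 1 ≤ d - 1 := ⟨by omega, by omega, by omega, by omega⟩
  have hc2 : 1 ≤ p ∧ 0 ≤ n ∧ 0 ≤ k ∧ 1 ≤ d := ⟨by omega, by omega, by omega, by omega⟩
  rw [countO, countO, if_pos hc1, if_pos hc2]
  obtain ⟨e, he1, he2⟩ : ∃ e : ℕ, (d - 1).toNat = e ∧ d.toNat = e + 1 :=
    ⟨(d - 1).toNat, rfl, by omega⟩
  rw [he1, he2]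
  exact key_lemma p.toNat n.toNat k e (by omega) hk (by omega) (by omega)
end

section
/- For all integers p ≥ 2, n ≥ 0 and d ≥ 1, one has O(p,n,0,d) = Σ_{k=0}^{d−1} O(p−1,n,k,d). -/
open scoped BigOperators

namespace Stmt7Aux

lemma aux_choose_lower (c t : ℕ) (ht : 1 ≤ t) : c + 1 ≤ Nat.choose (c + t) t := by
  induction t with
  | zero => omega
  | succ t ih =>
    rcases Nat.eq_zero_or_pos t with rfl | h
    · simp
    · have h1 := ih h
      have h2 : Nat.choose (c + t) t ≤ Nat.choose (c + t + 1) (t + 1) := by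
        rw [Nat.choose_succ_succ']; omega
      have h3 : c + (t + 1) = c + t + 1 := by omega
      rw [h3]; omega

lemma le_maxBinomIdx {a t : ℕ} (ht : 1 ≤ t) {k : ℕ} (hk : Nat.choose k t ≤ a) :
    k ≤ maxBinomIdx a t := by
  have hk' : k < a + t + 1 := by
    rcases le_or_gt t k with h | h
    · have h2 := aux_choose_lower (k - t) t ht
      rw [Nat.sub_add_cancel h] at h2
      omega
    · omega
  unfold maxBinomIdx
  exact Finset.le_sup (f := id) (Finset.mem_filter.mpr ⟨Finset.mem_range.mpr hk', hk⟩)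

lemma choose_maxBinomIdx_le {a t : ℕ} (ha : 1 ≤ a) (ht : 1 ≤ t) :
    Nat.choose (maxBinomIdx a t) t ≤ a := by
  have hne : ((Finset.range (a + t + 1)).filter fun k => Nat.choose k t ≤ a).Nonempty :=
    ⟨t, Finset.mem_filter.mpr ⟨Finset.mem_range.mpr (by omega), by simpa [Nat.choose_self] using ha⟩⟩
  obtain ⟨b, hb, hbe⟩ := Finset.exists_mem_eq_sup _ hne id
  unfold maxBinomIdx
  rw [hbe]
  exact (Finset.mem_filter.mp hb).2

lemma lt_choose_succ_maxBinomIdx {a t : ℕ} (ha : 1 ≤ a) (ht : 1 ≤ t) :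
    a < Nat.choose (maxBinomIdx a t + 1) t := by
  by_contra h
  push_neg at h
  have := le_maxBinomIdx ht h
  omega

lemma macaulay_zero (t : ℕ) : macaulay 0 t = 0 := by cases t <;> simp [macaulay]

lemma macaulay_succ {a t : ℕ} (ha : a ≠ 0) :
    macaulay a (t + 1) = Nat.choose (maxBinomIdx a (t + 1) + 1) (t + 2) +
      macaulay (a - Nat.choose (maxBinomIdx a (t + 1)) (t + 1)) t := by
  rw [macaulay, if_neg ha]

lemma macaulay_lt : ∀ t a m : ℕ, a < Nat.choose m t → macaulay a t < Nat.choose (m + 1) (t + 1)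
  | 0, a, m, h => by
    have ha : a = 0 := by simpa [Nat.lt_one_iff] using h
    subst ha
    simp [macaulay_zero]
  | (t+1), a, m, h => by
    rcases Nat.eq_zero_or_pos a with rfl | ha
    · rw [macaulay_zero]
      have hm : t + 1 ≤ m := by
        by_contra hc; push_neg at hc
        rw [Nat.choose_eq_zero_of_lt hc] at h; omega
      exact Nat.choose_pos (by omega)
    · have hmx1 := choose_maxBinomIdx_le ha (Nat.le_add_left 1 t)
      have hmx2 := lt_choose_succ_maxBinomIdx ha (Nat.le_add_left 1 t)
      set k := maxBinomIdx a (t + 1) with hk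
      have hkm : k < m := by
        by_contra hc; push_neg at hc
        have := Nat.choose_le_choose (t + 1) hc
        omega
      have hps : Nat.choose (k + 1) (t + 1) = Nat.choose k t + Nat.choose k (t + 1) :=
        Nat.choose_succ_succ' k t
      have hr : a - Nat.choose k (t + 1) < Nat.choose k t := by omega
      have ih := macaulay_lt t (a - Nat.choose k (t + 1)) k hr
      rw [macaulay_succ (by omega), ← hk]
      simp only [show t + 1 + 1 = t + 2 from rfl] at *
      have hp : Nat.choose (k + 1) (t + 2) + Nat.choose (k + 1) (t + 1) =
          Nat.choose (k + 2) (t + 2) := by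
        have h9 := Nat.choose_succ_succ' (k + 1) (t + 1)
        simp only [show t + 1 + 1 = t + 2 from rfl, show k + 1 + 1 = k + 2 from rfl] at h9
        omega
      have hle : Nat.choose (k + 2) (t + 2) ≤ Nat.choose (m + 1) (t + 2) :=
        Nat.choose_le_choose _ (by omega)
      omega

lemma macaulay_mono : ∀ t a b : ℕ, a ≤ b → macaulay a t ≤ macaulay b t
  | 0, _, _, _ => by simp [macaulay]
  | (t+1), a, b, hab => by
    rcases Nat.eq_zero_or_pos a with rfl | ha
    · simp [macaulay_zero]
    have hb : 1 ≤ b := le_trans ha hab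
    have h1 := choose_maxBinomIdx_le ha (Nat.le_add_left 1 t)
    have h2 := lt_choose_succ_maxBinomIdx ha (Nat.le_add_left 1 t)
    have h3 := choose_maxBinomIdx_le hb (Nat.le_add_left 1 t)
    have h4 := lt_choose_succ_maxBinomIdx hb (Nat.le_add_left 1 t)
    set ka := maxBinomIdx a (t + 1) with hka
    set kb := maxBinomIdx b (t + 1) with hkb
    have hkk : ka ≤ kb := by rw [hkb]; exact le_maxBinomIdx (Nat.le_add_left 1 t) (le_trans h1 hab)
    rw [macaulay_succ (by omega), macaulay_succ (by omega), ← hka, ← hkb]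
    rcases eq_or_lt_of_le hkk with heq | hlt
    · rw [heq]
      have hm := macaulay_mono t (a - Nat.choose kb (t + 1)) (b - Nat.choose kb (t + 1)) (by omega)
      omega
    · have hps : Nat.choose (ka + 1) (t + 1) = Nat.choose ka t + Nat.choose ka (t + 1) :=
        Nat.choose_succ_succ' ka t
      have hra : a - Nat.choose ka (t + 1) < Nat.choose ka t := by omega
      have hma := macaulay_lt t _ ka hra
      have hp : Nat.choose (ka + 1) (t + 2) + Nat.choose (ka + 1) (t + 1) =
          Nat.choose (ka + 2) (t + 2) := by
        have h9 := Nat.choose_succ_succ' (ka + 1) (t + 1)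
        simp only [show t + 1 + 1 = t + 2 from rfl, show ka + 1 + 1 = ka + 2 from rfl] at h9
        omega
      have hle : Nat.choose (ka + 2) (t + 2) ≤ Nat.choose (kb + 1) (t + 2) :=
        Nat.choose_le_choose _ (by omega)
      omega

lemma macaulay_choose (c t : ℕ) (ht : 1 ≤ t) :
    macaulay (Nat.choose (c + t) t) t = Nat.choose (c + t + 1) (t + 1) := by
  obtain ⟨t, rfl⟩ : ∃ t', t = t' + 1 := ⟨t - 1, by omega⟩
  have hct : c + (t + 1) = c + t + 1 := by omega
  have ha : 1 ≤ Nat.choose (c + t + 1) (t + 1) := Nat.choose_pos (by omega)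
  set a := Nat.choose (c + t + 1) (t + 1) with haa
  have hm : maxBinomIdx a (t + 1) = c + t + 1 := by
    have hle : c + t + 1 ≤ maxBinomIdx a (t + 1) :=
      le_maxBinomIdx (Nat.le_add_left 1 t) le_rfl
    have h3 := choose_maxBinomIdx_le ha (Nat.le_add_left 1 t)
    by_contra hne
    have hgt : c + t + 2 ≤ maxBinomIdx a (t + 1) := by omega
    have h5 : Nat.choose (c + t + 2) (t + 1) ≤ Nat.choose (maxBinomIdx a (t + 1)) (t + 1) :=
      Nat.choose_le_choose _ hgt
    have hstrict : a < Nat.choose (c + t + 2) (t + 1) := by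
      have h6 : Nat.choose (c + t + 2) (t + 1) = Nat.choose (c + t + 1) t + a :=
        Nat.choose_succ_succ' (c + t + 1) t
      have h7 : 0 < Nat.choose (c + t + 1) t := Nat.choose_pos (by omega)
      omega
    omega
  rw [hct, macaulay_succ (by omega), hm, Nat.sub_self, macaulay_zero]
  simp only [show t + 1 + 1 = t + 2 from rfl, Nat.add_zero]


variable {h : ℕ → ℕ} {c : ℕ}

lemma oseq_le (hh : IsFiniteOSeq h) (h1 : h 1 ≤ c + 1) :
    ∀ i, h (i + 1) ≤ Nat.choose (c + (i + 1)) (i + 1) := by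
  intro i
  induction i with
  | zero => simpa [Nat.choose_one_right] using h1
  | succ i ih =>
    have hb := hh.2.2.2 (i + 1) (by omega)
    have hmono := macaulay_mono (i + 1) (h (i + 1)) (Nat.choose (c + (i + 1)) (i + 1)) ih
    rw [macaulay_choose c (i + 1) (by omega)] at hmono
    have he : c + (i + 1 + 1) = c + (i + 1) + 1 := by omega
    rw [he]
    omega

lemma oseq_strict (hh : IsFiniteOSeq h) {i0 : ℕ} (hi0 : 1 ≤ i0)
    (hs : h i0 < Nat.choose (c + i0) i0) :
    ∀ i, i0 ≤ i → h i < Nat.choose (c + i) i := by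
  intro i hi
  induction i with
  | zero => omega
  | succ i ih =>
    rcases Nat.eq_or_lt_of_le hi with heq | hlt
    · exact heq ▸ hs
    · have hii : i0 ≤ i := by omega
      have hprev := ih hii
      have hb := hh.2.2.2 i (le_trans hi0 hii)
      have hml := macaulay_lt i (h i) (c + i) hprev
      have hmono := macaulay_mono i (h (i + 1 - 1)) (h i) (by simp)
      have he : c + (i + 1) = c + i + 1 := by omega
      rw [he]
      omega

lemma oseq_bddAbove (hh : IsFiniteOSeq h) : BddAbove {t | h t ≠ 0} := by
  obtain ⟨N, hN⟩ := hh.2.2.1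
  exact ⟨N, fun t ht => le_of_not_gt fun hc => ht (hN t hc.le)⟩

lemma le_socleDeg (hh : IsFiniteOSeq h) {t : ℕ} (ht : h t ≠ 0) : t ≤ socleDeg h :=
  le_csSup (oseq_bddAbove hh) ht

lemma mult_eq_sum (hh : IsFiniteOSeq h) {N : ℕ} (hN : ∀ t, N ≤ t → h t = 0) :
    mult h = ∑ i ∈ Finset.range N, h i := by
  apply finsum_eq_sum_of_support_subset
  intro t ht
  simp only [Function.mem_support] at ht
  simp only [Finset.coe_range, Set.mem_Iio]
  by_contra hc
  exact ht (hN t (by omega))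

lemma sum_le_mult (hh : IsFiniteOSeq h) (K : ℕ) : ∑ i ∈ Finset.range K, h i ≤ mult h := by
  obtain ⟨N, hN⟩ := hh.2.2.1
  have hN' : ∀ t, max N K ≤ t → h t = 0 := fun t ht => hN t (le_trans (le_max_left _ _) ht)
  rw [mult_eq_sum hh hN']
  exact Finset.sum_le_sum_of_subset (Finset.range_subset_range.mpr (le_max_right _ _))

lemma val_le_mult (hh : IsFiniteOSeq h) (i : ℕ) : h i ≤ mult h := by
  have h1 := sum_le_mult hh (i + 1)
  have h2 : h i ≤ ∑ j ∈ Finset.range (i + 1), h j :=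
    Finset.single_le_sum (fun j _ => Nat.zero_le _) (Finset.self_mem_range_succ i)
  omega

lemma ncard_biUnion {α ι : Type*} (s : Finset ι) (t : ι → Set α)
    (hfin : ∀ i ∈ s, (t i).Finite)
    (hdisj : ∀ i ∈ s, ∀ j ∈ s, i ≠ j → Disjoint (t i) (t j)) :
    (⋃ i ∈ s, t i).ncard = ∑ i ∈ s, (t i).ncard := by
  classical
  induction s using Finset.induction with
  | empty => simp
  | @insert a s ha ih =>
    rw [Finset.sum_insert ha, Finset.set_biUnion_insert]
    have hf1 : (t a).Finite := hfin a (Finset.mem_insert_self a s)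
    have hf2 : (⋃ i ∈ s, t i).Finite :=
      Set.Finite.biUnion s.finite_toSet fun i hi => hfin i (Finset.mem_insert_of_mem hi)
    have hdj : Disjoint (t a) (⋃ i ∈ s, t i) := by
      refine Set.disjoint_left.mpr fun x hxa hxu => ?_
      simp only [Set.mem_iUnion] at hxu
      obtain ⟨i, hi, hxi⟩ := hxu
      exact Set.disjoint_left.mp
        (hdisj a (Finset.mem_insert_self a s) i (Finset.mem_insert_of_mem hi)
          (fun he => ha (he ▸ hi))) hxa hxi
    rw [Set.ncard_union_eq hdj hf1 hf2,
      ih (fun i hi => hfin i (Finset.mem_insert_of_mem hi))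
        (fun i hi j hj hij => hdisj i (Finset.mem_insert_of_mem hi) j
          (Finset.mem_insert_of_mem hj) hij)]


lemma key (c n d : ℕ) (hd : 1 ≤ d) :
    {h : ℕ → ℕ | IsFiniteOSeq h ∧ mult h = d ∧ socleDeg h ≤ n ∧
        (∀ i : ℕ, 1 ≤ i → h i < Nat.choose (c + 1 + i) i)}.ncard
    = ∑ k ∈ Finset.range d, {h : ℕ → ℕ | IsFiniteOSeq h ∧ mult h = d ∧ socleDeg h ≤ n ∧
        (∀ i : ℕ, i ≤ k → h i = Nat.choose (c + i) i) ∧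
        (∀ i : ℕ, k < i → h i < Nat.choose (c + i) i)}.ncard := by
  classical
  set S : Set (ℕ → ℕ) := {h | IsFiniteOSeq h ∧ mult h = d ∧ socleDeg h ≤ n ∧
      (∀ i : ℕ, 1 ≤ i → h i < Nat.choose (c + 1 + i) i)} with hS
  set T : ℕ → Set (ℕ → ℕ) := fun k => {h | IsFiniteOSeq h ∧ mult h = d ∧ socleDeg h ≤ n ∧
      (∀ i : ℕ, i ≤ k → h i = Nat.choose (c + i) i) ∧
      (∀ i : ℕ, k < i → h i < Nat.choose (c + i) i)} with hT
  have hzero : ∀ h : ℕ → ℕ, IsFiniteOSeq h → socleDeg h ≤ n → ∀ i, n < i → h i = 0 := by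
    intro h hh hs i hi
    by_contra hc
    have := le_socleDeg hh hc
    omega
  have hSfin : S.Finite := by
    have hinj : Set.InjOn
        (fun (h : ℕ → ℕ) (i : Fin (n + 1)) => (⟨min (h i.val) d, by omega⟩ : Fin (d + 1))) S := by
      intro h1 hm1 h2 hm2 he
      simp only [hS, Set.mem_setOf_eq] at hm1 hm2
      funext i
      rcases le_or_gt i n with hle | hlt
      · have e1 := congrFun he ⟨i, by omega⟩
        simp only [Fin.mk.injEq] at e1
        have b1 : h1 i ≤ d := hm1.2.1 ▸ val_le_mult hm1.1 i
        have b2 : h2 i ≤ d := hm2.2.1 ▸ val_le_mult hm2.1 i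
        omega
      · rw [hzero h1 hm1.1 hm1.2.2.1 i hlt, hzero h2 hm2.1 hm2.2.2.1 i hlt]
    exact Set.Finite.of_finite_image (Set.toFinite _) hinj
  have hTS : ∀ k, T k ⊆ S := by
    intro k h hm
    simp only [hT, Set.mem_setOf_eq] at hm
    obtain ⟨hh, hmu, hso, heq, hlt⟩ := hm
    refine ⟨hh, hmu, hso, fun i hi => ?_⟩
    have hle : h i ≤ Nat.choose (c + i) i := by
      rcases le_or_gt i k with h1 | h1
      · exact (heq i h1).le
      · exact (hlt i h1).le
    have hstep : Nat.choose (c + i) i < Nat.choose (c + 1 + i) i := by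
      obtain ⟨j, rfl⟩ : ∃ j, i = j + 1 := ⟨i - 1, by omega⟩
      have hps : Nat.choose (c + (j + 1) + 1) (j + 1) =
          Nat.choose (c + (j + 1)) j + Nat.choose (c + (j + 1)) (j + 1) :=
        Nat.choose_succ_succ' (c + (j + 1)) j
      have hpos : 0 < Nat.choose (c + (j + 1)) j := Nat.choose_pos (by omega)
      have he : c + 1 + (j + 1) = c + (j + 1) + 1 := by omega
      rw [he]
      omega
    omega
  have hcover : S ⊆ ⋃ k ∈ Finset.range d, T k := by
    intro h hm
    simp only [hS, Set.mem_setOf_eq] at hm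
    obtain ⟨hh, hmu, hso, hlt⟩ := hm
    obtain ⟨N, hN⟩ := hh.2.2.1
    set KS : Set ℕ := {k | ∀ i, i ≤ k → h i = Nat.choose (c + i) i} with hKS
    have h0 : 0 ∈ KS := by
      intro i hi
      have : i = 0 := by omega
      subst this
      simpa using hh.1
    have hbdd : BddAbove KS := by
      refine ⟨N, fun k hk => ?_⟩
      have h1 : h k = Nat.choose (c + k) k := hk k le_rfl
      have h2 : 0 < Nat.choose (c + k) k := Nat.choose_pos (by omega)
      by_contra hc
      push_neg at hc
      have := hN k (by omega)
      omega
    set K := sSup KS with hK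
    have hKmem : K ∈ KS := Nat.sSup_mem ⟨0, h0⟩ hbdd
    have hKnot : h (K + 1) ≠ Nat.choose (c + (K + 1)) (K + 1) := by
      intro hE
      have hmem : K + 1 ∈ KS := by
        intro i hi
        rcases Nat.eq_or_lt_of_le hi with heq | hi'
        · subst heq; exact hE
        · exact hKmem i (by omega)
      have := le_csSup hbdd hmem
      omega
    have hKle : h (K + 1) ≤ Nat.choose (c + (K + 1)) (K + 1) := by
      rcases Nat.eq_zero_or_pos K with hK0 | hKpos
      · rw [hK0]
        simp only [Nat.zero_add]
        have hl1 := hlt 1 le_rfl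
        have e1 : Nat.choose (c + 1 + 1) 1 = c + 1 + 1 := Nat.choose_one_right _
        have e2 : Nat.choose (c + 1) 1 = c + 1 := Nat.choose_one_right _
        omega
      · have hb := hh.2.2.2 K hKpos
        have hEq : h K = Nat.choose (c + K) K := hKmem K le_rfl
        rw [hEq, macaulay_choose c K hKpos] at hb
        have he : c + (K + 1) = c + K + 1 := by omega
        rw [he]; exact hb
    have hKstrict : ∀ i, K < i → h i < Nat.choose (c + i) i := fun i hi =>
      oseq_strict hh (by omega : 1 ≤ K + 1) (lt_of_le_of_ne hKle hKnot) i (by omega)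
    have hKd : K < d := by
      have hsum : ∑ i ∈ Finset.range (K + 1), h i ≤ d := hmu ▸ sum_le_mult hh (K + 1)
      have hge : K + 1 ≤ ∑ i ∈ Finset.range (K + 1), h i := by
        calc K + 1 = ∑ _i ∈ Finset.range (K + 1), 1 := by simp
        _ ≤ _ := Finset.sum_le_sum fun i hi => by
            rw [hKmem i (Nat.lt_succ_iff.mp (Finset.mem_range.mp hi))]
            exact Nat.choose_pos (by omega)
      omega
    exact Set.mem_iUnion₂.mpr ⟨K, Finset.mem_range.mpr hKd, ⟨hh, hmu, hso, hKmem, hKstrict⟩⟩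
  have hdisj : ∀ i ∈ Finset.range d, ∀ j ∈ Finset.range d, i ≠ j → Disjoint (T i) (T j) := by
    have key2 : ∀ i j : ℕ, i < j → Disjoint (T i) (T j) := by
      intro i j hij
      refine Set.disjoint_left.mpr fun h hi hj => ?_
      simp only [hT, Set.mem_setOf_eq] at hi hj
      have h1 := hi.2.2.2.2 (i + 1) (by omega)
      have h2 := hj.2.2.2.1 (i + 1) (by omega)
      omega
    intro i _ j _ hij
    rcases Nat.lt_or_ge i j with hlt | hge
    · exact key2 i j hlt
    · exact (key2 j i (by omega)).symm
  have hset : S = ⋃ k ∈ Finset.range d, T k :=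
    Set.Subset.antisymm hcover (Set.iUnion₂_subset fun k _ => hTS k)
  rw [hset, ncard_biUnion _ _ (fun k _ => hSfin.subset (hTS k)) hdisj]

end Stmt7Aux

/-- For all integers `p ≥ 2`, `n ≥ 0` and `d ≥ 1`,
`O(p,n,0,d) = Σ_{k=0}^{d−1} O(p−1,n,k,d)`. -/
theorem stmt7 (p n d : ℤ) (hp : 2 ≤ p) (hn : 0 ≤ n) (hd : 1 ≤ d) :
    countO p n 0 d = ∑ k ∈ Finset.Icc (0 : ℤ) (d - 1), countO (p - 1) n k d := by
  have hp2 : 2 ≤ p.toNat := by omega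
  set c : ℕ := p.toNat - 2 with hc
  have hd' : 1 ≤ d.toNat := by omega
  have hLHS : countO p n 0 d =
      ({h : ℕ → ℕ | IsFiniteOSeq h ∧ mult h = d.toNat ∧ socleDeg h ≤ n.toNat ∧
        (∀ i : ℕ, 1 ≤ i → h i < Nat.choose (c + 1 + i) i)}).ncard := by
    rw [countO, if_pos ⟨by omega, hn, le_refl (0 : ℤ), hd⟩]
    congr 1
    ext h
    simp only [Set.mem_setOf_eq]
    constructor
    · rintro ⟨hh, hmu, hso, _, hlt⟩
      refine ⟨hh, hmu, hso, fun i hi => ?_⟩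
      have h2 := hlt i (by exact_mod_cast (by omega : (0 : ℤ) < (i : ℤ)))
      have he : p.toNat - 1 + i = c + 1 + i := by omega
      rwa [he] at h2
    · rintro ⟨hh, hmu, hso, hlt⟩
      refine ⟨hh, hmu, hso, fun i hi => ?_, fun i hi => ?_⟩
      · have hi0 : i = 0 := by omega
        subst hi0
        simpa using hh.1
      · have h1 : 1 ≤ i := by omega
        have h2 := hlt i h1
        have he : p.toNat - 1 + i = c + 1 + i := by omega
        rw [he]; exact h2
  rw [hLHS, Stmt7Aux.key c n.toNat d.toNat hd']
  clear hLHS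
  refine Finset.sum_nbij' (i := fun (k : ℕ) => (k : ℤ)) (j := fun (k : ℤ) => k.toNat)
    ?_ ?_ ?_ ?_ ?_
  · intro a ha
    simp only [Finset.mem_range] at ha
    simp only [Finset.mem_Icc]
    omega
  · intro a ha
    simp only [Finset.mem_Icc] at ha
    simp only [Finset.mem_range]
    omega
  · intro a _
    simp
  · intro a ha
    simp only [Finset.mem_Icc] at ha
    simp only [Int.toNat_of_nonneg ha.1]
  · intro a ha
    simp only [Finset.mem_range] at ha
    rw [countO, if_pos ⟨by omega, hn, by exact_mod_cast Nat.zero_le a, hd⟩]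
    congr 1
    ext h
    simp only [Set.mem_setOf_eq]
    have he : ∀ i : ℕ, (p - 1).toNat - 1 + i = c + i := by intro i; omega
    constructor
    · rintro ⟨hh, hmu, hso, heq, hlt⟩
      refine ⟨hh, hmu, hso, fun i hi => ?_, fun i hi => ?_⟩
      · rw [he i]
        exact heq i (by exact_mod_cast hi)
      · rw [he i]
        exact hlt i (by exact_mod_cast hi)
    · rintro ⟨hh, hmu, hso, heq, hlt⟩
      refine ⟨hh, hmu, hso, fun i hi => ?_, fun i hi => ?_⟩
      · have h2 := heq i (by exact_mod_cast hi)
        rwa [he i] at h2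
      · have h2 := hlt i (by exact_mod_cast hi)
        rwa [he i] at h2
end

section
/- For all integers p > 1, n ≥ 0, k > 0 and d > 0, one has O(p,n,k,d) = Σ_{i=k}^{n} Σ_{j=1}^{d−1} O(p−1,n,i,d−j) · O(p,i−1,k−1,j). -/
open scoped BigOperators

section Aux

lemma macaulay_zero (t : ℕ) : macaulay 0 t = 0 := by
  cases t <;> simp [macaulay]

lemma macaulay_succ {a s : ℕ} (ha : a ≠ 0) : macaulay a (s+1) =
    Nat.choose (maxBinomIdx a (s + 1) + 1) (s + 2) +
        macaulay (a - Nat.choose (maxBinomIdx a (s + 1)) (s + 1)) s := by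
  rw [macaulay, if_neg ha]

lemma pascal (n k : ℕ) : (n+1).choose (k+1) = n.choose k + n.choose (k+1) := by
  simpa [Nat.succ_eq_add_one] using Nat.choose_succ_succ n k

lemma choose_lower (n u : ℕ) : n + 1 ≤ n.choose (u+1) + (u+1) := by
  induction n with
  | zero => omega
  | succ n ih =>
    rcases le_or_gt (u+1) (n+1) with h | h
    · have h1 : 1 ≤ n.choose u := Nat.choose_pos (by omega)
      have h2 : (n+1).choose (u+1) = n.choose u + n.choose (u+1) := pascal n u
      omega
    · omega

lemma maxBinomIdx_spec {a t : ℕ} (ha : 1 ≤ a) (ht : 1 ≤ t) :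
    (maxBinomIdx a t).choose t ≤ a ∧ a < (maxBinomIdx a t + 1).choose t := by
  set s := (Finset.range (a + t + 1)).filter (fun k => Nat.choose k t ≤ a) with hs
  have hns : s.Nonempty := by
    refine ⟨t, Finset.mem_filter.2 ⟨Finset.mem_range.2 (by omega), ?_⟩⟩
    simp [Nat.choose_self]; omega
  have hmax : s.max' hns = s.sup id := by
    rw [Finset.max'_eq_sup', Finset.sup'_eq_sup]
  have e : maxBinomIdx a t = s.sup id := by rw [maxBinomIdx, hs]
  have hmem : maxBinomIdx a t ∈ s := by
    rw [e, ← hmax]; exact s.max'_mem hns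
  have h1 : (maxBinomIdx a t).choose t ≤ a := (Finset.mem_filter.1 hmem).2
  refine ⟨h1, ?_⟩
  by_contra hcon
  push_neg at hcon
  obtain ⟨u, rfl⟩ : ∃ u, t = u + 1 := ⟨t - 1, by omega⟩
  have hle : maxBinomIdx a (u+1) + 1 < a + (u+1) + 1 := by
    have := choose_lower (maxBinomIdx a (u+1) + 1) u
    omega
  have hmem2 : maxBinomIdx a (u+1) + 1 ∈ s := by
    exact Finset.mem_filter.2 ⟨Finset.mem_range.2 hle, hcon⟩
  have h2 : id (maxBinomIdx a (u+1) + 1) ≤ s.sup id := Finset.le_sup hmem2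
  rw [← e] at h2
  simp at h2

lemma maxBinomIdx_eq {a t m : ℕ} (ht : 1 ≤ t) (htm : t ≤ m)
    (h1 : m.choose t ≤ a) (h2 : a < (m+1).choose t) : maxBinomIdx a t = m := by
  have ha : 1 ≤ a := le_trans (Nat.choose_pos htm) h1
  obtain ⟨l1, l2⟩ := maxBinomIdx_spec (a := a) (t := t) ha ht
  rcases lt_trichotomy (maxBinomIdx a t) m with h | h | h
  · exfalso
    have : (maxBinomIdx a t + 1).choose t ≤ m.choose t := Nat.choose_le_choose t (by omega)
    omega
  · exact h
  · exfalso
    have : (m+1).choose t ≤ (maxBinomIdx a t).choose t := Nat.choose_le_choose t (by omega)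
    omega

/-- L1a: strict case of the expansion lemma. -/
lemma macaulay_choose_add {m t b : ℕ} (ht : 1 ≤ t) (htm : t ≤ m) (hb : b < m.choose (t-1)) :
    macaulay (m.choose t + b) t = (m+1).choose (t+1) + macaulay b (t-1) := by
  obtain ⟨s, rfl⟩ : ∃ s, t = s + 1 := ⟨t - 1, by omega⟩
  simp only [Nat.add_sub_cancel] at hb ⊢
  have hidx : maxBinomIdx (m.choose (s+1) + b) (s+1) = m := by
    apply maxBinomIdx_eq (by omega) htm (by omega)
    have hp : (m+1).choose (s+1) = m.choose s + m.choose (s+1) := pascal m s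
    omega
  have hne : m.choose (s+1) + b ≠ 0 := by
    have := Nat.choose_pos htm
    omega
  rw [macaulay_succ hne, hidx]
  simp

/-- L1: expansion lemma, allowing equality, for t ≥ 2. -/
lemma macaulay_choose_add' {m t b : ℕ} (ht : 2 ≤ t) (htm : t ≤ m) (hb : b ≤ m.choose (t-1)) :
    macaulay (m.choose t + b) t = (m+1).choose (t+1) + macaulay b (t-1) := by
  rcases lt_or_eq_of_le hb with h | h
  · exact macaulay_choose_add (by omega) htm h
  · subst h
    obtain ⟨u, rfl⟩ : ∃ u, t = u + 2 := ⟨t - 2, by omega⟩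
    simp only [show u + 2 - 1 = u + 1 from rfl] at htm ⊢
    have e1 : m.choose (u+2) + m.choose (u+1) = (m+1).choose (u+2) := by
      have hp : (m+1).choose (u+2) = m.choose (u+1) + m.choose (u+2) := pascal m (u+1)
      omega
    have e2 : macaulay ((m+1).choose (u+2)) (u+2) = (m+2).choose (u+3) := by
      have h := macaulay_choose_add (m := m+1) (t := u+2) (b := 0) (by omega) (by omega)
        (Nat.choose_pos (by omega))
      simp only [Nat.add_zero, macaulay_zero] at h
      exact h
    have e3 : macaulay (m.choose (u+1)) (u+1) = (m+1).choose (u+2) := by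
      have h := macaulay_choose_add (m := m) (t := u+1) (b := 0) (by omega) (by omega)
        (Nat.choose_pos (by omega))
      simp only [Nat.add_zero, macaulay_zero] at h
      rw [h]
    rw [e1, e2, e3]
    have pas : (m+2).choose (u+3) = (m+1).choose (u+2) + (m+1).choose (u+2+1) :=
      pascal (m+1) (u+2)
    omega

lemma macaulay_one (a : ℕ) (ha : 1 ≤ a) : macaulay a 1 = (a+1).choose 2 := by
  have h := macaulay_choose_add (m := a) (t := 1) (b := 0) le_rfl ha (by simp)
  simp only [Nat.choose_one_right, Nat.add_zero, macaulay_zero] at h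
  rw [h]

/-- L2: if `a < C(m,t)` then `a^⟨t⟩ < C(m+1,t+1)`. -/
lemma macaulay_lt {t : ℕ} (ht : 1 ≤ t) : ∀ {a m : ℕ}, a < m.choose t →
    macaulay a t < (m+1).choose (t+1) := by
  induction t with
  | zero => omega
  | succ s ih =>
    intro a m ha
    have hmt : s + 1 ≤ m := by
      by_contra h
      have : m.choose (s+1) = 0 := Nat.choose_eq_zero_of_lt (by omega)
      omega
    rcases Nat.eq_zero_or_pos a with rfl | hpos
    · rw [macaulay_zero]
      exact Nat.choose_pos (by omega)
    obtain ⟨l1, l2⟩ := maxBinomIdx_spec (a := a) (t := s+1) hpos (by omega)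
    set M := maxBinomIdx a (s+1) with hM
    have hMm : M < m := by
      by_contra h
      have : m.choose (s+1) ≤ M.choose (s+1) := Nat.choose_le_choose _ (by omega)
      omega
    have hMs : s + 1 ≤ M := by
      by_contra h
      have h0 : M.choose (s+1) = 0 := Nat.choose_eq_zero_of_lt (by omega)
      have h1 : (M+1).choose (s+1) ≤ 1 := by
        rcases Nat.lt_or_ge (M+1) (s+1) with h' | h'
        · simp [Nat.choose_eq_zero_of_lt h']
        · have he : M + 1 = s + 1 := by omega
          simp [he]
      omega
    have hrest : a - M.choose (s+1) < M.choose s := by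
      have hp : (M+1).choose (s+1) = M.choose s + M.choose (s+1) := pascal M s
      omega
    have hrec : macaulay a (s+1) = (M+1).choose (s+2) + macaulay (a - M.choose (s+1)) s := by
      rw [macaulay_succ (show a ≠ 0 by omega), ← hM]
    have hsub : macaulay (a - M.choose (s+1)) s < (M+1).choose (s+1) := by
      rcases Nat.eq_zero_or_pos s with rfl | hs
      · have h0 : a - M.choose (0+1) = 0 := by
          have := Nat.choose_zero_right M
          omega
        rw [h0, macaulay_zero]
        exact Nat.choose_pos (by omega)
      · exact ih hs hrest
    have pas : (M+2).choose (s+2) = (M+1).choose (s+1) + (M+1).choose (s+2) :=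
      pascal (M+1) (s+1)
    have hfin : (M+2).choose (s+2) ≤ (m+1).choose (s+1+1) := Nat.choose_le_choose _ (by omega)
    omega


lemma mult_eq_sum {h : ℕ → ℕ} {M : ℕ} (hM : ∀ t, M ≤ t → h t = 0) :
    mult h = ∑ t ∈ Finset.range M, h t := by
  apply finsum_eq_sum_of_support_subset
  intro t ht
  simp only [Function.mem_support] at ht
  simp only [Finset.coe_range, Set.mem_Iio]
  by_contra hc
  exact ht (hM t (by omega))

lemma socleDeg_le {h : ℕ → ℕ} {n : ℕ} (hz : ∀ t, n < t → h t = 0) : socleDeg h ≤ n := by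
  rw [socleDeg]
  rcases Set.eq_empty_or_nonempty {t | h t ≠ 0} with he | hne
  · rw [he, csSup_empty]; exact Nat.zero_le n
  · refine csSup_le hne fun b hb => ?_
    by_contra hc
    exact hb (hz b (by omega))

lemma vanish_of_socleDeg_le {h : ℕ → ℕ} {n : ℕ} (hb : ∃ M, ∀ t, M ≤ t → h t = 0)
    (hs : socleDeg h ≤ n) : ∀ t, n < t → h t = 0 := by
  intro t ht
  by_contra hne
  obtain ⟨M, hM⟩ := hb
  have hbdd : BddAbove {t | h t ≠ 0} := by
    refine ⟨M, fun x hx => ?_⟩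
    by_contra hc
    exact hx (hM x (by omega))
  have : t ≤ socleDeg h := le_csSup hbdd hne
  omega

lemma sSup_eq_of_greatest {A : Set ℕ} {i : ℕ} (hmem : i ∈ A) (hub : ∀ a ∈ A, a ≤ i) :
    sSup A = i := IsGreatest.csSup_eq ⟨hmem, hub⟩

lemma finite_of_bounded (N D : ℕ) :
    {h : ℕ → ℕ | (∀ t, h t ≤ D) ∧ ∀ t, N < t → h t = 0}.Finite := by
  have hsub : {h : ℕ → ℕ | (∀ t, h t ≤ D) ∧ ∀ t, N < t → h t = 0} ⊆
      Set.range (fun (g : Fin (N+1) → Fin (D+1)) => fun t =>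
        if ht : t < N + 1 then (g ⟨t, ht⟩ : ℕ) else 0) := by
    rintro h ⟨h1, h2⟩
    refine ⟨fun x => ⟨h x, Nat.lt_succ_of_le (h1 x)⟩, ?_⟩
    funext t
    by_cases ht : t < N + 1
    · simp [ht]
    · simp [ht, h2 t (by omega)]
  exact (Set.finite_range _).subset hsub

/-- The sets counted by `countO` in the main range, with ℕ parameters. -/
def TS (P N K D : ℕ) : Set (ℕ → ℕ) :=
  {h | IsFiniteOSeq h ∧ mult h = D ∧ socleDeg h ≤ N ∧
    (∀ i, i ≤ K → h i = (P - 1 + i).choose i) ∧ (∀ i, K < i → h i < (P - 1 + i).choose i)}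

lemma TS_vanish {P N K D : ℕ} {h : ℕ → ℕ} (hh : h ∈ TS P N K D) :
    ∀ t, N < t → h t = 0 :=
  vanish_of_socleDeg_le hh.1.2.2.1 hh.2.2.1

lemma TS_le {P N K D : ℕ} {h : ℕ → ℕ} (hh : h ∈ TS P N K D) (t : ℕ) : h t ≤ D := by
  have := single_le_finsum (f := h) t
    (by obtain ⟨M, hM⟩ := hh.1.2.2.1
        exact Set.Finite.subset (Set.finite_Iio M) (fun x hx => by
          simp only [Function.mem_support] at hx
          simp only [Set.mem_Iio]
          by_contra hc
          exact hx (hM x (by omega))))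
    (fun j => Nat.zero_le _)
  rw [show ∑ᶠ t, h t = mult h from rfl, hh.2.1] at this
  exact this

lemma TS_finite (P N K D : ℕ) : (TS P N K D).Finite := by
  refine (finite_of_bounded N D).subset fun h hh => ⟨TS_le hh, TS_vanish hh⟩


noncomputable def idxI (P : ℕ) (h : ℕ → ℕ) : ℕ := sSup {t | (P - 2 + t).choose t ≤ h t}

noncomputable def part1 (P : ℕ) (h : ℕ → ℕ) : ℕ → ℕ :=
  fun t => if t ≤ idxI P h then (P - 2 + t).choose t else h t

noncomputable def part2 (P : ℕ) (h : ℕ → ℕ) : ℕ → ℕ :=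
  fun s => if s + 1 ≤ idxI P h then h (s+1) - (P - 2 + (s+1)).choose (s+1) else 0

noncomputable def jJ (P : ℕ) (h : ℕ → ℕ) : ℕ := mult (part2 P h)

def glue (q : (ℕ → ℕ) × (ℕ → ℕ)) : ℕ → ℕ := fun t => match t with
  | 0 => q.1 0
  | s+1 => q.1 (s+1) + q.2 s

section IdxFacts

variable {P N K D : ℕ} {h : ℕ → ℕ}

lemma idx_facts (hP : 2 ≤ P) (hK : 1 ≤ K) (hh : h ∈ TS P N K D) :
    K ≤ idxI P h ∧ idxI P h ≤ N ∧
    (∀ t, t ≤ idxI P h → (P - 2 + t).choose t ≤ h t) ∧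
    (∀ t, idxI P h < t → h t < (P - 2 + t).choose t) := by
  set A := {t | (P - 2 + t).choose t ≤ h t} with hA
  have hKA : K ∈ A := by
    simp only [hA, Set.mem_setOf_eq]
    rw [hh.2.2.2.1 K le_rfl]
    exact Nat.choose_le_choose K (by omega)
  have hbdd : BddAbove A := by
    refine ⟨N, fun x hx => ?_⟩
    by_contra hc
    have h0 := TS_vanish hh x (by omega)
    have hp : 0 < (P - 2 + x).choose x := Nat.choose_pos (by omega)
    simp only [hA, Set.mem_setOf_eq, h0] at hx
    omega
  have hidx : idxI P h = sSup A := rfl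
  have hup : ∀ t, idxI P h < t → h t < (P - 2 + t).choose t := by
    intro t ht
    by_contra hc
    push_neg at hc
    have : t ≤ idxI P h := by rw [hidx]; exact le_csSup hbdd hc
    omega
  have hKle : K ≤ idxI P h := by rw [hidx]; exact le_csSup hbdd hKA
  have hmem : idxI P h ∈ A := by rw [hidx]; exact Nat.sSup_mem ⟨K, hKA⟩ hbdd
  have hNle : idxI P h ≤ N := by
    by_contra hc
    have h0 := TS_vanish hh (idxI P h) (by omega)
    have hp : 0 < (P - 2 + idxI P h).choose (idxI P h) := Nat.choose_pos (by omega)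
    simp only [hA, Set.mem_setOf_eq, h0] at hmem
    omega
  have step : ∀ t, (P - 2 + (t+1)).choose (t+1) ≤ h (t+1) → (P - 2 + t).choose t ≤ h t := by
    intro t hgt
    rcases Nat.eq_zero_or_pos t with rfl | ht
    · simp [hh.1.1]
    · by_contra hc
      push_neg at hc
      have hmac := hh.1.2.2.2 t ht
      have hlt : macaulay (h t) t < ((P - 2 + t) + 1).choose (t+1) := macaulay_lt ht hc
      have e : P - 2 + (t+1) = (P - 2 + t) + 1 := by omega
      rw [e] at hgt
      omega
  have hdown : ∀ δ t, (P - 2 + (t + δ)).choose (t + δ) ≤ h (t + δ) →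
      (P - 2 + t).choose t ≤ h t := by
    intro δ
    induction δ with
    | zero => intro t ht; simpa using ht
    | succ δ ih => intro t ht; exact ih t (step (t + δ) ht)
  refine ⟨hKle, hNle, ?_, hup⟩
  intro t ht
  obtain ⟨δ, hδ⟩ : ∃ δ, idxI P h = t + δ := ⟨idxI P h - t, by omega⟩
  rw [hδ] at hmem
  exact hdown δ t hmem

lemma part_glue (hP : 2 ≤ P) (hK : 1 ≤ K) (hh : h ∈ TS P N K D) :
    glue (part1 P h, part2 P h) = h := by
  obtain ⟨hKle, hNle, hlow, hup⟩ := idx_facts hP hK hh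
  funext t
  match t with
  | 0 =>
    simp only [glue, part1, Nat.zero_le, if_pos]
    simp [hh.1.1]
  | s+1 =>
    simp only [glue, part1, part2]
    by_cases hsI : s + 1 ≤ idxI P h
    · rw [if_pos hsI, if_pos hsI]
      have := hlow (s+1) hsI
      omega
    · rw [if_neg hsI, if_neg hsI]
      omega

lemma le_mult {h : ℕ → ℕ} {M : ℕ} (hM : ∀ t, M ≤ t → h t = 0) (t : ℕ) : h t ≤ mult h := by
  rw [mult_eq_sum hM]
  rcases lt_or_ge t M with hlt | hge
  · exact Finset.single_le_sum (fun i _ => Nat.zero_le _) (Finset.mem_range.2 hlt)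
  · rw [hM t hge]; exact Nat.zero_le _

lemma mult_split {P N K D : ℕ} {h : ℕ → ℕ} (hP : 2 ≤ P) (hK : 1 ≤ K) (hh : h ∈ TS P N K D) :
    mult h = mult (part1 P h) + mult (part2 P h) := by
  obtain ⟨hKle, hNle, hlow, hup⟩ := idx_facts hP hK hh
  have v0 : ∀ t, N + 2 ≤ t → h t = 0 := fun t ht => TS_vanish hh t (by omega)
  have v1 : ∀ t, N + 2 ≤ t → part1 P h t = 0 := by
    intro t ht
    simp only [part1]
    rw [if_neg (by omega)]
    exact TS_vanish hh t (by omega)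
  have v2 : ∀ s, N + 1 ≤ s → part2 P h s = 0 := by
    intro s hs
    simp only [part2]
    rw [if_neg (by omega)]
  rw [mult_eq_sum v0, mult_eq_sum v1, mult_eq_sum v2]
  rw [Finset.sum_range_succ' (f := h) (N+1), Finset.sum_range_succ' (f := part1 P h) (N+1)]
  have h0 : part1 P h 0 = h 0 := by
    simp only [part1]
    rw [if_pos (Nat.zero_le _)]
    simp [hh.1.1]
  have hpt : ∀ s ∈ Finset.range (N+1), h (s+1) = part1 P h (s+1) + part2 P h s := by
    intro s _
    simp only [part1, part2]
    by_cases hsI : s + 1 ≤ idxI P h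
    · rw [if_pos hsI, if_pos hsI]
      have := hlow (s+1) hsI
      omega
    · rw [if_neg hsI, if_neg hsI]
      omega
  rw [Finset.sum_congr rfl hpt, Finset.sum_add_distrib, h0]
  omega

lemma split_mem {P N K D : ℕ} {h : ℕ → ℕ} (hP : 2 ≤ P) (hK : 1 ≤ K) (hh : h ∈ TS P N K D) :
    part1 P h ∈ TS (P-1) N (idxI P h) (D - jJ P h) ∧
    part2 P h ∈ TS P (idxI P h - 1) (K-1) (jJ P h) ∧
    1 ≤ jJ P h ∧ jJ P h + 1 ≤ D := by
  obtain ⟨hKle, hNle, hlow, hup⟩ := idx_facts hP hK hh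
  set I := idxI P h with hI
  have hI1 : 1 ≤ I := le_trans hK hKle
  have v1 : ∀ t, N + 1 ≤ t → part1 P h t = 0 := by
    intro t ht
    simp only [part1, ← hI]
    rw [if_neg (by omega)]
    exact TS_vanish hh t (by omega)
  have v2 : ∀ s, I ≤ s → part2 P h s = 0 := by
    intro s hs
    simp only [part2, ← hI]
    rw [if_neg (by omega)]
  have p1le : ∀ t, t ≤ I → part1 P h t = (P - 2 + t).choose t := by
    intro t ht
    simp only [part1, ← hI]
    rw [if_pos ht]
  have p1gt : ∀ t, I < t → part1 P h t = h t := by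
    intro t ht
    simp only [part1, ← hI]
    rw [if_neg (by omega)]
  have p2le : ∀ s, s + 1 ≤ I → part2 P h s = h (s+1) - (P - 2 + (s+1)).choose (s+1) := by
    intro s hs
    simp only [part2, ← hI]
    rw [if_pos hs]
  -- O-sequence property of part1
  have hOS1 : IsFiniteOSeq (part1 P h) := by
    refine ⟨?_, ?_, ⟨N+1, v1⟩, ?_⟩
    · rw [p1le 0 (Nat.zero_le _)]; simp
    · intro t h0
      by_cases htI : t ≤ I
      · exfalso
        rw [p1le t htI] at h0
        have : 0 < (P - 2 + t).choose t := Nat.choose_pos (by omega)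
        omega
      · push_neg at htI
        rw [p1gt t htI] at h0
        rw [p1gt (t+1) (by omega)]
        exact hh.1.2.1 t h0
    · intro t ht
      rcases lt_trichotomy t I with hlt | heq | hgt
      · rw [p1le t (by omega), p1le (t+1) (by omega)]
        have hmac := macaulay_choose_add (m := P - 2 + t) (t := t) (b := 0) ht (by omega)
          (Nat.choose_pos (by omega))
        simp only [Nat.add_zero, macaulay_zero] at hmac
        rw [hmac]
        have e : P - 2 + (t+1) = (P - 2 + t) + 1 := by omega
        rw [e]
      · rw [p1le t (by omega), p1gt (t+1) (by omega)]
        have hmac := macaulay_choose_add (m := P - 2 + t) (t := t) (b := 0) ht (by omega)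
          (Nat.choose_pos (by omega))
        simp only [Nat.add_zero, macaulay_zero] at hmac
        rw [hmac]
        have hu := hup (t+1) (by omega)
        have e : P - 2 + (t+1) = (P - 2 + t) + 1 := by omega
        rw [e] at hu
        omega
      · rw [p1gt t (by omega), p1gt (t+1) (by omega)]
        exact hh.1.2.2.2 t ht
  -- O-sequence property of part2
  have hcaple : ∀ t, h t ≤ (P - 1 + t).choose t := by
    intro t
    rcases le_or_gt t K with h1 | h1
    · rw [hh.2.2.2.1 t h1]
    · exact le_of_lt (hh.2.2.2.2 t h1)
  have p20 : part2 P h 0 = 1 := by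
    rw [p2le 0 hI1]
    have hc : h 1 = (P - 1 + 1).choose 1 := hh.2.2.2.1 1 hK
    simp only [Nat.zero_add, Nat.choose_one_right] at hc ⊢
    omega
  have hOS2 : IsFiniteOSeq (part2 P h) := by
    refine ⟨p20, ?_, ⟨I, v2⟩, ?_⟩
    · intro s h0
      by_cases hs2 : s + 2 ≤ I
      · have hs1 : s + 1 ≤ I := by omega
        rw [p2le s hs1] at h0
        have hl := hlow (s+1) hs1
        have heq : h (s+1) = (P - 2 + (s+1)).choose (s+1) := by omega
        have hmac := macaulay_choose_add (m := P - 2 + (s+1)) (t := s+1) (b := 0) (by omega)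
          (by omega) (Nat.choose_pos (by omega))
        simp only [Nat.add_zero, macaulay_zero] at hmac
        have hg : h (s+2) ≤ macaulay (h (s+1)) (s+1) := hh.1.2.2.2 (s+1) (by omega)
        rw [heq, hmac] at hg
        rw [p2le (s+1) hs2]
        simp only [show s+1+1 = s+2 from rfl] at hg ⊢
        have e : P - 2 + (s+2) = (P - 2 + (s+1)) + 1 := by omega
        rw [e]
        omega
      · exact v2 (s+1) (by omega)
    · intro s hs
      by_cases hs2 : s + 2 ≤ I
      · have hs1 : s + 1 ≤ I := by omega
        have hl := hlow (s+1) hs1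
        have hrepr : h (s+1) = (P - 2 + (s+1)).choose (s+1) + part2 P h s := by
          rw [p2le s hs1]; omega
        have hble : part2 P h s ≤ (P - 2 + (s+1)).choose s := by
          have hcap := hcaple (s+1)
          have hpas : (P - 1 + (s+1)).choose (s+1)
              = (P - 2 + (s+1)).choose s + (P - 2 + (s+1)).choose (s+1) := by
            have e : P - 1 + (s+1) = (P - 2 + (s+1)) + 1 := by omega
            rw [e]
            exact pascal _ s
          rw [p2le s hs1]
          omega
        have hmac : macaulay (h (s+1)) (s+1)
            = ((P - 2 + (s+1)) + 1).choose (s+2) + macaulay (part2 P h s) s := by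
          rw [hrepr]
          exact macaulay_choose_add' (by omega) (by omega) hble
        have hg : h (s+2) ≤ macaulay (h (s+1)) (s+1) := hh.1.2.2.2 (s+1) (by omega)
        rw [hmac] at hg
        rw [p2le (s+1) hs2]
        simp only [show s+1+1 = s+2 from rfl, show s+1-1 = s from rfl] at hg ⊢
        have e : P - 2 + (s+2) = (P - 2 + (s+1)) + 1 := by omega
        rw [e]
        omega
      · rw [v2 (s+1) (by omega)]
        exact Nat.zero_le _
  -- multiplicities
  have hmm : mult (part1 P h) + mult (part2 P h) = D := by
    have := mult_split hP hK hh
    rw [← this, hh.2.1]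
  have hJ1 : 1 ≤ jJ P h := by
    have := le_mult (h := part2 P h) (M := I) v2 0
    rw [p20] at this
    exact this
  have hm1 : 1 ≤ mult (part1 P h) := by
    have := le_mult (h := part1 P h) (M := N+1) v1 0
    rw [p1le 0 (Nat.zero_le _)] at this
    simpa using this
  have hJD : jJ P h + 1 ≤ D := by
    have : mult (part2 P h) = jJ P h := rfl
    omega
  have hm1D : mult (part1 P h) = D - jJ P h := by
    have : mult (part2 P h) = jJ P h := rfl
    omega
  refine ⟨⟨hOS1, hm1D, socleDeg_le (fun t ht => v1 t (by omega)), ?_, ?_⟩,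
          ⟨hOS2, rfl, socleDeg_le (fun s hs => v2 s (by omega)), ?_, ?_⟩, hJ1, hJD⟩
  · intro i hi
    rw [p1le i hi]
    have e : P - 1 - 1 + i = P - 2 + i := by omega
    rw [e]
  · intro i hi
    rw [p1gt i hi]
    have := hup i hi
    have e : P - 1 - 1 + i = P - 2 + i := by omega
    rw [e]
    exact this
  · intro s hsK
    have hs1 : s + 1 ≤ I := by omega
    have e2 : P - 2 + (s+1) = P - 1 + s := by omega
    rw [p2le s hs1, e2]
    have hc : h (s+1) = (P - 1 + (s+1)).choose (s+1) := hh.2.2.2.1 (s+1) (by omega)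
    have hpas : (P - 1 + (s+1)).choose (s+1)
        = (P - 1 + s).choose s + (P - 1 + s).choose (s+1) := by
      have e : P - 1 + (s+1) = (P - 1 + s) + 1 := by omega
      rw [e]
      exact pascal _ s
    omega
  · intro s hsK
    by_cases hs1 : s + 1 ≤ I
    · have e2 : P - 2 + (s+1) = P - 1 + s := by omega
      rw [p2le s hs1, e2]
      have hc : h (s+1) < (P - 1 + (s+1)).choose (s+1) := hh.2.2.2.2 (s+1) (by omega)
      have hpas : (P - 1 + (s+1)).choose (s+1)
          = (P - 1 + s).choose s + (P - 1 + s).choose (s+1) := by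
        have e : P - 1 + (s+1) = (P - 1 + s) + 1 := by omega
        rw [e]
        exact pascal _ s
      have hj : 0 < (P - 1 + s).choose s := Nat.choose_pos (by omega)
      omega
    · rw [v2 s (by omega)]
      exact Nat.choose_pos (by omega)

lemma glue_mem {P N K D I J : ℕ} {h1 h2 : ℕ → ℕ} (hP : 2 ≤ P) (hK : 1 ≤ K)
    (hKI : K ≤ I) (hIN : I ≤ N) (hJ1 : 1 ≤ J) (hJD : J + 1 ≤ D)
    (m1 : h1 ∈ TS (P-1) N I (D-J)) (m2 : h2 ∈ TS P (I-1) (K-1) J) :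
    glue (h1, h2) ∈ TS P N K D ∧ idxI P (glue (h1, h2)) = I ∧
    part1 P (glue (h1, h2)) = h1 ∧ part2 P (glue (h1, h2)) = h2 := by
  have hI1 : 1 ≤ I := le_trans hK hKI
  set g := glue (h1, h2) with hg
  have ge0 : g 0 = 1 := m1.1.1
  have gs : ∀ s, g (s+1) = h1 (s+1) + h2 s := fun s => rfl
  have h2z : ∀ s, I ≤ s → h2 s = 0 := by
    intro s hs
    exact vanish_of_socleDeg_le m2.1.2.2.1 m2.2.2.1 s (by omega)
  have h1z : ∀ t, N < t → h1 t = 0 := TS_vanish m1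
  have h1capEq : ∀ t, t ≤ I → h1 t = (P - 2 + t).choose t := by
    intro t ht
    have h' := m1.2.2.2.1 t ht
    have e : P - 1 - 1 + t = P - 2 + t := by omega
    rw [h', e]
  have h1capLt : ∀ t, I < t → h1 t < (P - 2 + t).choose t := by
    intro t ht
    have h' := m1.2.2.2.2 t ht
    have e : P - 1 - 1 + t = P - 2 + t := by omega
    rw [e] at h'
    exact h'
  have h2capEq : ∀ s, s ≤ K - 1 → h2 s = (P - 1 + s).choose s := m2.2.2.2.1
  have h2capLe : ∀ s, h2 s ≤ (P - 1 + s).choose s := by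
    intro s
    rcases le_or_gt s (K-1) with h1' | h1'
    · rw [h2capEq s h1']
    · exact le_of_lt (m2.2.2.2.2 s h1')
  have h20 : h2 0 = 1 := m2.1.1
  -- caps of g
  have capEq : ∀ t, t ≤ K → g t = (P - 1 + t).choose t := by
    intro t ht
    match t with
    | 0 => simpa using ge0
    | s+1 =>
      rw [gs s, h1capEq (s+1) (by omega), h2capEq s (by omega)]
      have e2 : P - 2 + (s+1) = P - 1 + s := by omega
      have hpas : (P - 1 + (s+1)).choose (s+1)
          = (P - 1 + s).choose s + (P - 1 + s).choose (s+1) := by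
        have e3 : P - 1 + (s+1) = (P - 1 + s) + 1 := by omega
        rw [e3]; exact pascal _ s
      rw [e2]
      omega
  have capLt : ∀ t, K < t → g t < (P - 1 + t).choose t := by
    intro t ht
    match t with
    | s+1 =>
      rw [gs s]
      by_cases hsI : s + 1 ≤ I
      · rw [h1capEq (s+1) hsI]
        have hlt : h2 s < (P - 1 + s).choose s := m2.2.2.2.2 s (by omega)
        have e2 : P - 2 + (s+1) = P - 1 + s := by omega
        have hpas : (P - 1 + (s+1)).choose (s+1)
            = (P - 1 + s).choose s + (P - 1 + s).choose (s+1) := by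
          have e3 : P - 1 + (s+1) = (P - 1 + s) + 1 := by omega
          rw [e3]; exact pascal _ s
        rw [e2]
        omega
      · rw [h2z s (by omega)]
        have hlt := h1capLt (s+1) (by omega)
        have hmono : (P - 2 + (s+1)).choose (s+1) ≤ (P - 1 + (s+1)).choose (s+1) :=
          Nat.choose_le_choose _ (by omega)
        omega
  have gz : ∀ t, N < t → g t = 0 := by
    intro t ht
    match t with
    | s+1 =>
      rw [gs s, h1z (s+1) (by omega), h2z s (by omega)]
  -- growth of g
  have hgrow : ∀ t, 1 ≤ t → g (t+1) ≤ macaulay (g t) t := by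
    intro t ht
    match t with
    | s+1 =>
      by_cases hA : s + 2 ≤ I
      · -- both s+1, s+2 ≤ I
        rw [gs s, gs (s+1), h1capEq (s+1) (by omega), h1capEq (s+2) (by omega)]
        rcases Nat.eq_zero_or_pos s with rfl | hs
        · simp only [Nat.zero_add]
          rw [h20]
          have e1 : P - 2 + 1 = P - 1 := by omega
          rw [e1]
          simp only [Nat.choose_one_right]
          have egP : P - 1 + 1 = P := by omega
          rw [egP]
          rw [macaulay_one P (by omega)]
          have h2le : h2 1 ≤ (P - 1 + 1).choose 1 := h2capLe 1
          simp only [Nat.choose_one_right] at h2le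
          have hpas : (P+1).choose 2 = P.choose 1 + P.choose 2 := pascal P 1
          simp only [Nat.choose_one_right] at hpas
          have e2 : P - 2 + 2 = P := by omega
          rw [e2]
          omega
        · have hb : h2 s ≤ (P - 2 + (s+1)).choose ((s+1)-1) := by
            have hc := h2capLe s
            have e2 : P - 2 + (s+1) = P - 1 + s := by omega
            rw [e2]
            simpa using hc
          rw [macaulay_choose_add' (m := P - 2 + (s+1)) (t := s+1) (b := h2 s)
            (by omega) (by omega) hb]
          simp only [show s+1-1 = s from rfl, show s+1+1 = s+2 from rfl]
          have e3 : P - 2 + (s+2) = (P - 2 + (s+1)) + 1 := by omega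
          rw [e3]
          have hg2 : h2 (s+1) ≤ macaulay (h2 s) s := m2.1.2.2.2 s hs
          omega
      · by_cases hB : s + 1 ≤ I
        · -- I = s+1
          have hIeq : I = s + 1 := by omega
          rw [gs s, gs (s+1), h1capEq (s+1) (by omega), h2z (s+1) (by omega)]
          have hup1 : h1 (s+2) ≤ macaulay (h1 (s+1)) (s+1) := m1.1.2.2.2 (s+1) (by omega)
          have hmac0 := macaulay_choose_add (m := P - 2 + (s+1)) (t := s+1) (b := 0)
            (by omega) (by omega) (Nat.choose_pos (by omega))
          simp only [Nat.add_zero, macaulay_zero] at hmac0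
          rw [h1capEq (s+1) (by omega), hmac0] at hup1
          simp only [show s+1+1 = s+2 from rfl, show s+1-1 = s from rfl] at hup1 ⊢
          rcases Nat.eq_zero_or_pos s with rfl | hs
          · -- I = 1
            simp only [Nat.zero_add] at hup1 ⊢
            rw [h20]
            have e1 : P - 2 + 1 = P - 1 := by omega
            rw [e1] at hup1 ⊢
            simp only [Nat.choose_one_right]
            have egP : P - 1 + 1 = P := by omega
            rw [egP, macaulay_one P (by omega)]
            have hmono : (P - 1 + 1).choose 2 ≤ (P+1).choose 2 :=
              Nat.choose_le_choose _ (by omega)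
            omega
          · have hb : h2 s ≤ (P - 2 + (s+1)).choose ((s+1)-1) := by
              have hc := h2capLe s
              have e2 : P - 2 + (s+1) = P - 1 + s := by omega
              rw [e2]
              simpa using hc
            rw [macaulay_choose_add' (m := P - 2 + (s+1)) (t := s+1) (b := h2 s)
              (by omega) (by omega) hb]
            simp only [show s+1+1 = s+2 from rfl, show s+1-1 = s from rfl]
            omega
        · -- I < s+1
          rw [gs s, gs (s+1), h2z s (by omega), h2z (s+1) (by omega)]
          simpa using m1.1.2.2.2 (s+1) (by omega)
  have hOSg : IsFiniteOSeq g := by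
    refine ⟨ge0, ?_, ⟨N+2, fun t ht => gz t (by omega)⟩, hgrow⟩
    intro t h0
    match t with
    | 0 => rw [ge0] at h0; omega
    | s+1 =>
      rw [gs s] at h0
      have hsI : I < s + 1 := by
        by_contra hc
        push_neg at hc
        rw [h1capEq (s+1) hc] at h0
        have : 0 < (P - 2 + (s+1)).choose (s+1) := Nat.choose_pos (by omega)
        omega
      rw [gs (s+1), m1.1.2.1 (s+1) (by omega), h2z (s+1) (by omega)]
  -- multiplicity of g
  have hmult : mult g = D := by
    have v0 : ∀ t, N + 2 ≤ t → g t = 0 := fun t ht => gz t (by omega)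
    have v1 : ∀ t, N + 1 ≤ t → h1 t = 0 := fun t ht => h1z t (by omega)
    have v2 : ∀ s, N + 1 ≤ s → h2 s = 0 := fun s hs => h2z s (by omega)
    rw [mult_eq_sum v0, Finset.sum_range_succ' (f := g) (N+1)]
    have hpt : ∀ s ∈ Finset.range (N+1), g (s+1) = h1 (s+1) + h2 s := fun s _ => gs s
    rw [Finset.sum_congr rfl hpt, Finset.sum_add_distrib, ge0]
    have e1 : ∑ s ∈ Finset.range (N+1), h1 (s+1)
        = (∑ t ∈ Finset.range (N+2), h1 t) - h1 0 := by
      rw [Finset.sum_range_succ' (f := h1) (N+1)]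
      omega
    have e2 : (∑ t ∈ Finset.range (N+2), h1 t) = D - J := by
      rw [← mult_eq_sum (fun t ht => v1 t (by omega))]
      exact m1.2.1
    have e3 : (∑ s ∈ Finset.range (N+1), h2 s) = J := by
      rw [← mult_eq_sum v2]
      exact m2.2.1
    have h10 : h1 0 = 1 := m1.1.1
    rw [e1, e2, e3, h10]
    omega
  -- socle degree of g
  have hsoc : socleDeg g ≤ N := socleDeg_le (fun t ht => gz t (by omega))
  have hgmem : g ∈ TS P N K D := ⟨hOSg, hmult, hsoc, capEq, capLt⟩
  -- idxI of g
  have hidx : idxI P g = I := by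
    apply sSup_eq_of_greatest
    · obtain ⟨s, rfl⟩ : ∃ s, I = s + 1 := ⟨I - 1, by omega⟩
      simp only [Set.mem_setOf_eq]
      rw [gs s, h1capEq (s+1) le_rfl]
      omega
    · intro a ha
      simp only [Set.mem_setOf_eq] at ha
      by_contra hc
      push_neg at hc
      obtain ⟨s, rfl⟩ : ∃ s, a = s + 1 := ⟨a - 1, by omega⟩
      rw [gs s, h2z s (by omega)] at ha
      have := h1capLt (s+1) (by omega)
      omega
  refine ⟨hgmem, hidx, ?_, ?_⟩
  · funext t
    simp only [part1, hidx]
    by_cases ht : t ≤ I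
    · rw [if_pos ht, h1capEq t ht]
    · rw [if_neg ht]
      obtain ⟨s, rfl⟩ : ∃ s, t = s + 1 := ⟨t - 1, by omega⟩
      rw [gs s, h2z s (by omega)]
      omega
  · funext s
    simp only [part2, hidx]
    by_cases hs : s + 1 ≤ I
    · rw [if_pos hs, gs s, h1capEq (s+1) hs]
      omega
    · rw [if_neg hs, h2z s (by omega)]

lemma ncard_prod_eq (A B : Set (ℕ → ℕ)) : (A ×ˢ B).ncard = A.ncard * B.ncard := by
  rw [← Nat.card_coe_set_eq, ← Nat.card_coe_set_eq, ← Nat.card_coe_set_eq,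
    Nat.card_congr (Equiv.Set.prod A B), Nat.card_prod]

lemma fiber_card (P N K D I J : ℕ) (hP : 2 ≤ P) (hK : 1 ≤ K)
    (hKI : K ≤ I) (hIN : I ≤ N) (hJ1 : 1 ≤ J) (hJD : J + 1 ≤ D) :
    {h | h ∈ TS P N K D ∧ idxI P h = I ∧ jJ P h = J}.ncard =
      (TS (P-1) N I (D-J)).ncard * (TS P (I-1) (K-1) J).ncard := by
  set Fib : Set (ℕ → ℕ) := {h | h ∈ TS P N K D ∧ idxI P h = I ∧ jJ P h = J} with hFib
  set Ψ : (ℕ → ℕ) → (ℕ → ℕ) × (ℕ → ℕ) := fun h => (part1 P h, part2 P h) with hΨ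
  have hinj : Set.InjOn Ψ Fib := by
    intro a ha b hb hab
    have ga : glue (Ψ a) = a := part_glue hP hK ha.1
    have gb : glue (Ψ b) = b := part_glue hP hK hb.1
    rw [← ga, ← gb, hab]
  have himg : Ψ '' Fib = (TS (P-1) N I (D-J)) ×ˢ (TS P (I-1) (K-1) J) := by
    apply Set.eq_of_subset_of_subset
    · rintro q ⟨h, hh, rfl⟩
      obtain ⟨hs, hidx, hj⟩ := hh
      obtain ⟨hm1, hm2, _, _⟩ := split_mem hP hK hs
      rw [hidx, hj] at hm1
      rw [hidx] at hm2
      rw [hj] at hm2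
      exact ⟨hm1, hm2⟩
    · rintro ⟨h1, h2⟩ ⟨hm1, hm2⟩
      obtain ⟨hgm, hgidx, hgp1, hgp2⟩ := glue_mem hP hK hKI hIN hJ1 hJD hm1 hm2
      refine ⟨glue (h1, h2), ⟨hgm, hgidx, ?_⟩, ?_⟩
      · show mult (part2 P (glue (h1, h2))) = J
        rw [hgp2]
        exact hm2.2.1
      · simp only [hΨ, hgp1, hgp2]
  rw [← Set.ncard_image_of_injOn hinj, himg, ncard_prod_eq]

theorem mainN (P N K D : ℕ) (hP : 2 ≤ P) (hK : 1 ≤ K) (hD : 1 ≤ D) :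
    (TS P N K D).ncard =
      ∑ I ∈ Finset.Icc K N, ∑ J ∈ Finset.Icc 1 (D-1),
        (TS (P-1) N I (D-J)).ncard * (TS P (I-1) (K-1) J).ncard := by
  classical
  have hfin := TS_finite P N K D
  set F := hfin.toFinset with hF
  set u : Finset (ℕ × ℕ) := Finset.Icc K N ×ˢ Finset.Icc 1 (D-1) with hu
  have hmaps : ∀ h ∈ F, (idxI P h, jJ P h) ∈ u := by
    intro h hh
    rw [Set.Finite.mem_toFinset] at hh
    obtain ⟨hKI, hIN, _, _⟩ := idx_facts hP hK hh
    obtain ⟨_, _, hJ1, hJD⟩ := split_mem hP hK hh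
    simp only [hu, Finset.mem_product, Finset.mem_Icc]
    omega
  have hcard := Finset.card_eq_sum_card_fiberwise hmaps
  rw [Set.ncard_eq_toFinset_card _ hfin, hcard, hu, Finset.sum_product]
  apply Finset.sum_congr rfl
  intro I hI
  apply Finset.sum_congr rfl
  intro J hJ
  simp only [Finset.mem_Icc] at hI hJ
  have e1 : (Finset.filter (fun a => (idxI P a, jJ P a) = (I, J)) F).card
      = {h | h ∈ TS P N K D ∧ idxI P h = I ∧ jJ P h = J}.ncard := by
    rw [← Set.ncard_coe_finset]
    congr 1
    ext h
    simp only [Finset.coe_filter, Set.mem_setOf_eq, Set.Finite.mem_toFinset, hF, Prod.mk.injEq]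
  rw [e1, fiber_card P N K D I J hP hK hI.1 hI.2 hJ.1 (by omega)]

end IdxFacts

lemma countO_eq {p n k d : ℤ} (hp : 1 ≤ p) (hn : 0 ≤ n) (hk : 0 ≤ k) (hd : 1 ≤ d) :
    countO p n k d = (TS p.toNat n.toNat k.toNat d.toNat).ncard := by
  rw [countO, if_pos ⟨hp, hn, hk, hd⟩]
  congr 1
  ext h
  simp only [Set.mem_setOf_eq, TS]
  constructor
  · rintro ⟨a, b, c, d', e⟩
    exact ⟨a, b, c, fun i hi => d' i (by omega), fun i hi => e i (by omega)⟩
  · rintro ⟨a, b, c, d', e⟩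
    exact ⟨a, b, c, fun i hi => d' i (by omega), fun i hi => e i (by omega)⟩

end Aux

/-- For all integers `p > 1`, `n ≥ 0`, `k > 0` and `d > 0`,
`O(p,n,k,d) = Σ_{i=k}^{n} Σ_{j=1}^{d−1} O(p−1,n,i,d−j) · O(p,i−1,k−1,j)`. -/
theorem stmt8 (p n k d : ℤ) (hp : 1 < p) (hn : 0 ≤ n) (hk : 0 < k) (hd : 0 < d) :
    countO p n k d =
      ∑ i ∈ Finset.Icc k n, ∑ j ∈ Finset.Icc (1 : ℤ) (d - 1),
        countO (p - 1) n i (d - j) * countO p (i - 1) (k - 1) j := by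
  set P := p.toNat with hP
  set N := n.toNat with hN
  set K := k.toNat with hK
  set D := d.toNat with hD
  rw [countO_eq (by omega) hn (by omega) (by omega)]
  rw [mainN P N K D (by omega) (by omega) (by omega)]
  symm
  refine Finset.sum_nbij' (fun i => i.toNat) (fun I => (I : ℤ)) ?_ ?_ ?_ ?_ ?_
  · intro i hi
    beta_reduce
    simp only [Finset.mem_Icc] at hi ⊢
    omega
  · intro I hI
    beta_reduce
    simp only [Finset.mem_Icc] at hI ⊢
    omega
  · intro i hi
    beta_reduce
    simp only [Finset.mem_Icc] at hi
    omega
  · intro I hI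
    beta_reduce
    simp only [Finset.mem_Icc] at hI
    omega
  · intro i hi
    beta_reduce
    simp only [Finset.mem_Icc] at hi
    refine Finset.sum_nbij' (fun j => j.toNat) (fun J => (J : ℤ)) ?_ ?_ ?_ ?_ ?_
    · intro j hj
      beta_reduce
      simp only [Finset.mem_Icc] at hj ⊢
      omega
    · intro J hJ
      beta_reduce
      simp only [Finset.mem_Icc] at hJ ⊢
      omega
    · intro j hj
      beta_reduce
      simp only [Finset.mem_Icc] at hj
      omega
    · intro J hJ
      beta_reduce
      simp only [Finset.mem_Icc] at hJ
      omega
    · intro j hj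
      beta_reduce
      simp only [Finset.mem_Icc] at hj
      have c1 : countO (p - 1) n i (d - j)
          = (TS (p-1).toNat n.toNat i.toNat (d-j).toNat).ncard :=
        countO_eq (by omega) hn (by omega) (by omega)
      have c2 : countO p (i - 1) (k - 1) j
          = (TS p.toNat (i-1).toNat (k-1).toNat j.toNat).ncard :=
        countO_eq (by omega) (by omega) (by omega) (by omega)
      rw [c1, c2]
      have e1 : (p - 1).toNat = P - 1 := by omega
      have e2 : (d - j).toNat = D - j.toNat := by omega
      have e3 : (i - 1).toNat = i.toNat - 1 := by omega
      have e4 : (k - 1).toNat = K - 1 := by omega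
      rw [e1, e2, e3, e4, ← hN, ← hP]
end

section
/- For every integer d > 2, O_d = 1 + Σ_{ℓ=1}^{d−2} Σ_{k=1}^{d−2} Σ_{i=k}^{d−2} Σ_{j=1}^{d−2} O(d−ℓ−1, d−1, i, d−j) · O(d−ℓ, i−1, k−1, j). -/
open scoped BigOperators

namespace StmtAux


lemma pascal (n k : ℕ) : (n+1).choose (k+1) = n.choose k + n.choose (k+1) := by
  simpa [Nat.succ_eq_add_one] using Nat.choose_succ_succ n k

lemma macaulay_zero (t : ℕ) : macaulay 0 t = 0 := by
  cases t <;> simp [macaulay]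

lemma succ_le_choose (a t : ℕ) (ht : 1 ≤ t) : a + 1 ≤ (a + t + 1).choose t := by
  induction t with
  | zero => omega
  | succ s ih =>
    rcases Nat.eq_or_lt_of_le ht with h | h
    · simp [← h]
    · have hs : 1 ≤ s := by omega
      have h3 := ih hs
      have h2 : (a + s + 2).choose (s+1) = (a+s+1).choose s + (a+s+1).choose (s+1) :=
        pascal (a+s+1) s
      have he : a + (s+1) + 1 = a + s + 2 := by omega
      rw [he]
      omega

lemma le_choose_add : ∀ s : ℕ, 1 ≤ s → ∀ n : ℕ, n ≤ n.choose s + s := by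
  intro s
  induction s with
  | zero => omega
  | succ t ih =>
    intro hs n
    rcases Nat.eq_or_lt_of_le hs with h | h
    · simp [← h, Nat.choose_one_right]
    · have ht : 1 ≤ t := by omega
      by_cases hn : n ≤ t + 1
      · omega
      · obtain ⟨m, rfl⟩ : ∃ m, n = m + 1 := ⟨n - 1, by omega⟩
        have h2 : (m+1).choose (t+1) = m.choose t + m.choose (t+1) := pascal m t
        have h3 : m ≤ m.choose t + t := ih ht m
        omega

lemma maxBinomIdx_le {a t : ℕ} (ha : 1 ≤ a) (ht : 1 ≤ t) :
    Nat.choose (maxBinomIdx a t) t ≤ a := by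
  classical
  have hne : ((Finset.range (a + t + 1)).filter fun k => Nat.choose k t ≤ a).Nonempty := by
    refine ⟨0, ?_⟩
    simp only [Finset.mem_filter, Finset.mem_range]
    constructor
    · omega
    · have : Nat.choose 0 t = 0 := Nat.choose_eq_zero_of_lt (by omega)
      omega
  obtain ⟨b, hb, hbe⟩ := Finset.exists_mem_eq_sup _ hne id
  rw [maxBinomIdx, hbe]
  simpa using (Finset.mem_filter.1 hb).2

lemma le_maxBinomIdx {a t k : ℕ} (h : Nat.choose k t ≤ a) (hk : k ≤ a + t) :
    k ≤ maxBinomIdx a t := by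
  classical
  have : k ∈ (Finset.range (a + t + 1)).filter fun k => Nat.choose k t ≤ a := by
    simp only [Finset.mem_filter, Finset.mem_range]; exact ⟨by omega, h⟩
  exact Finset.le_sup (f := id) this

lemma t_le_maxBinomIdx {a t : ℕ} (ha : 1 ≤ a) : t ≤ maxBinomIdx a t :=
  le_maxBinomIdx (by simpa [Nat.choose_self] using ha) (by omega)

lemma lt_choose_maxBinomIdx_succ {a t : ℕ} (ha : 1 ≤ a) (ht : 1 ≤ t) :
    a < Nat.choose (maxBinomIdx a t + 1) t := by
  classical
  by_contra hcon
  push_neg at hcon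
  -- maxBinomIdx a t + 1 is also in the filter unless it exceeds a + t
  by_cases hbig : maxBinomIdx a t + 1 ≤ a + t
  · have := le_maxBinomIdx hcon hbig
    omega
  · -- maxBinomIdx a t ≥ a + t, so choose (a+t+1) t ≤ ... but C(a+t+1,t) ≥ a+1 > a
    have h1 : a + t ≤ maxBinomIdx a t := by omega
    have h2 : maxBinomIdx a t ≤ a + t := by
      classical
      have : ∀ b ∈ (Finset.range (a + t + 1)).filter fun k => Nat.choose k t ≤ a,
          id b ≤ a + t := by
        intro b hb
        have := (Finset.mem_filter.1 hb).1
        simp only [Finset.mem_range] at this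
        simp only [id_eq]
        omega
      exact Finset.sup_le this
    have h3 : maxBinomIdx a t = a + t := le_antisymm h2 h1
    have h4 := succ_le_choose a t ht
    rw [h3] at hcon
    omega

lemma maxBinomIdx_mono {a b t : ℕ} (h : a ≤ b) : maxBinomIdx a t ≤ maxBinomIdx b t := by
  classical
  apply Finset.sup_mono
  intro k hk
  simp only [Finset.mem_filter, Finset.mem_range] at *
  omega

lemma choose_lt_choose_succ_left {m t : ℕ} (ht : 1 ≤ t) (h : t ≤ m) :
    m.choose t < (m+1).choose t := by
  obtain ⟨u, rfl⟩ : ∃ u, t = u + 1 := ⟨t - 1, by omega⟩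
  have h1 := pascal m u
  have hpos : 0 < m.choose u := Nat.choose_pos (by omega)
  omega

lemma maxBinomIdx_choose {m s : ℕ} (hs : 1 ≤ s) (hm : s ≤ m) :
    maxBinomIdx (m.choose s) s = m := by
  have hpos : 0 < m.choose s := Nat.choose_pos hm
  have hge : m ≤ maxBinomIdx (m.choose s) s :=
    le_maxBinomIdx le_rfl (by have := le_choose_add s hs m; omega)
  have hle : maxBinomIdx (m.choose s) s ≤ m := by
    by_contra hcon
    push_neg at hcon
    have h1 : m.choose s < (maxBinomIdx (m.choose s) s).choose s := by
      calc m.choose s < (m+1).choose s := choose_lt_choose_succ_left hs hm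
        _ ≤ (maxBinomIdx (m.choose s) s).choose s := Nat.choose_le_choose s (by omega)
    have h2 := maxBinomIdx_le (a := m.choose s) (t := s) hpos hs
    omega
  omega

lemma macaulay_choose {m s : ℕ} (hs : 1 ≤ s) (hm : s ≤ m) :
    macaulay (m.choose s) s = (m+1).choose (s+1) := by
  obtain ⟨t, rfl⟩ : ∃ t, s = t + 1 := ⟨s - 1, by omega⟩
  have hpos : 0 < m.choose (t+1) := Nat.choose_pos hm
  rw [macaulay, if_neg (by omega), maxBinomIdx_choose hs hm]
  simp [macaulay_zero]

lemma macaulay_lt_choose : ∀ t a m : ℕ, t ≤ m → a < m.choose t →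
    macaulay a t < (m+1).choose (t+1) := by
  intro t
  induction t with
  | zero =>
    intro a m _ _
    have : macaulay a 0 = 0 := rfl
    rw [this]
    exact Nat.choose_pos (by omega)
  | succ t ih =>
    intro a m hm ha
    show macaulay a (t+1) < (m+1).choose (t+2)
    by_cases h0 : a = 0
    · subst h0
      rw [macaulay_zero]
      exact Nat.choose_pos (by omega)
    · have ha1 : 1 ≤ a := by omega
      set u := maxBinomIdx a (t+1) with hu
      have hut : t + 1 ≤ u := t_le_maxBinomIdx ha1
      have hule : u.choose (t+1) ≤ a := maxBinomIdx_le ha1 (by omega)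
      have hum : u < m := by
        by_contra hcon
        push_neg at hcon
        have : m.choose (t+1) ≤ u.choose (t+1) := Nat.choose_le_choose _ hcon
        omega
      have hlt : a < (u+1).choose (t+1) := lt_choose_maxBinomIdx_succ ha1 (by omega)
      have hps : (u+1).choose (t+1) = u.choose t + u.choose (t+1) := pascal u t
      have hrem : a - u.choose (t+1) < u.choose t := by omega
      have hrec : macaulay a (t+1)
          = (u+1).choose (t+2) + macaulay (a - u.choose (t+1)) t := by
        rw [macaulay, if_neg h0]
      have hih := ih (a - u.choose (t+1)) u (by omega) hrem
      have hps2 : (u+2).choose (t+2) = (u+1).choose (t+1) + (u+1).choose (t+2) := pascal (u+1) (t+1)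
      have hmono : (u+2).choose (t+2) ≤ (m+1).choose (t+2) :=
        Nat.choose_le_choose _ (by omega)
      omega

lemma macaulay_mono : ∀ t a b : ℕ, a ≤ b → macaulay a t ≤ macaulay b t := by
  intro t
  induction t with
  | zero => intro a b _; rfl
  | succ t ih =>
    intro a b hab
    by_cases h0 : a = 0
    · subst h0; rw [macaulay_zero]; exact Nat.zero_le _
    · have ha1 : 1 ≤ a := by omega
      have hb1 : 1 ≤ b := by omega
      set u := maxBinomIdx a (t+1) with hu
      set v := maxBinomIdx b (t+1) with hv
      have huv : u ≤ v := maxBinomIdx_mono hab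
      have hut : t + 1 ≤ u := t_le_maxBinomIdx ha1
      have hule : u.choose (t+1) ≤ a := maxBinomIdx_le ha1 (by omega)
      have hvle : v.choose (t+1) ≤ b := maxBinomIdx_le hb1 (by omega)
      have hreca : macaulay a (t+1)
          = (u+1).choose (t+2) + macaulay (a - u.choose (t+1)) t := by
        rw [macaulay, if_neg h0]
      have hrecb : macaulay b (t+1)
          = (v+1).choose (t+2) + macaulay (b - v.choose (t+1)) t := by
        rw [macaulay, if_neg (by omega)]
      rcases Nat.eq_or_lt_of_le huv with heq | hlt
      · rw [hreca, hrecb, ← heq]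
        have := ih (a - u.choose (t+1)) (b - u.choose (t+1)) (by omega)
        omega
      · have hlta : a < (u+1).choose (t+1) := lt_choose_maxBinomIdx_succ ha1 (by omega)
        have hps : (u+1).choose (t+1) = u.choose t + u.choose (t+1) := pascal u t
        have hrem : a - u.choose (t+1) < u.choose t := by omega
        have h4 := macaulay_lt_choose t (a - u.choose (t+1)) u (by omega) hrem
        have hps2 : (u+2).choose (t+2) = (u+1).choose (t+1) + (u+1).choose (t+2) := pascal (u+1) (t+1)
        have hmono : (u+2).choose (t+2) ≤ (v+1).choose (t+2) :=
          Nat.choose_le_choose _ (by omega)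
        omega

lemma macaulay_add_choose {m t b : ℕ} (ht : 2 ≤ t) (hm : t ≤ m) (hb : b ≤ m.choose (t-1)) :
    macaulay (m.choose t + b) t = (m+1).choose (t+1) + macaulay b (t-1) := by
  obtain ⟨s, rfl⟩ : ∃ s, t = s + 1 := ⟨t - 1, by omega⟩
  have hs : 1 ≤ s := by omega
  simp only [Nat.add_sub_cancel] at hb ⊢
  rcases Nat.eq_or_lt_of_le hb with heq | hlt
  · subst heq
    have hps : m.choose (s+1) + m.choose s = (m+1).choose (s+1) := by
      have := pascal m s; omega
    rw [hps, macaulay_choose (by omega) (by omega),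
        macaulay_choose hs (by omega)]
    have := pascal (m+1) (s+1)
    omega
  · have hpos : 0 < m.choose (s+1) := Nat.choose_pos hm
    have hidx : maxBinomIdx (m.choose (s+1) + b) (s+1) = m := by
      have hge : m ≤ maxBinomIdx (m.choose (s+1) + b) (s+1) :=
        le_maxBinomIdx (by omega) (by have := le_choose_add (s+1) (by omega) m; omega)
      have hle : maxBinomIdx (m.choose (s+1) + b) (s+1) ≤ m := by
        by_contra hcon
        push_neg at hcon
        have h1 : (m+1).choose (s+1) ≤ (maxBinomIdx (m.choose (s+1) + b) (s+1)).choose (s+1) :=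
          Nat.choose_le_choose _ (by omega)
        have h2 := maxBinomIdx_le (a := m.choose (s+1) + b) (t := s+1) (by omega) (by omega)
        have hps : (m+1).choose (s+1) = m.choose s + m.choose (s+1) := pascal m s
        omega
      omega
    rw [macaulay, if_neg (by omega), hidx]
    congr 1
    congr 1
    omega

lemma macaulay_one {t : ℕ} (ht : 1 ≤ t) : macaulay 1 t = 1 := by
  have := macaulay_choose (m := t) (s := t) ht le_rfl
  simpa [Nat.choose_self] using this


section OSeq

variable {h : ℕ → ℕ}

lemma oseq_zero_of_le (hh : IsFiniteOSeq h) {m t : ℕ} (h0 : h m = 0) (hm : m ≤ t) :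
    h t = 0 := by
  induction t, hm using Nat.le_induction with
  | base => exact h0
  | succ n _ ih => exact hh.2.1 n ih

lemma oseq_ne_zero_of_le (hh : IsFiniteOSeq h) {m t : ℕ} (ht : h t ≠ 0) (hm : m ≤ t) :
    h m ≠ 0 := fun h0 => ht (oseq_zero_of_le hh h0 hm)

lemma mult_eq_sum {N : ℕ} (hN : ∀ t, N ≤ t → h t = 0) :
    mult h = ∑ t ∈ Finset.range N, h t := by
  apply finsum_eq_sum_of_support_subset
  intro x hx
  simp only [Function.mem_support] at hx
  simp only [Finset.coe_range, Set.mem_Iio]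
  by_contra hc
  exact hx (hN x (by omega))

/-- the socle degree: value is nonzero there, and zero beyond -/
lemma socle_ne_zero (hh : IsFiniteOSeq h) : h (socleDeg h) ≠ 0 := by
  obtain ⟨N, hN⟩ := hh.2.2.1
  have hbdd : BddAbove {t | h t ≠ 0} := by
    refine ⟨N, fun t ht => ?_⟩
    by_contra hc
    exact ht (hN t (by omega))
  have hne : {t | h t ≠ 0}.Nonempty := ⟨0, by simp [hh.1]⟩
  exact Nat.sSup_mem hne hbdd

lemma le_socle (hh : IsFiniteOSeq h) {t : ℕ} (ht : h t ≠ 0) : t ≤ socleDeg h := by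
  obtain ⟨N, hN⟩ := hh.2.2.1
  have hbdd : BddAbove {t | h t ≠ 0} := by
    refine ⟨N, fun t ht => ?_⟩
    by_contra hc
    exact ht (hN t (by omega))
  exact le_csSup hbdd ht

lemma zero_of_socle_lt (hh : IsFiniteOSeq h) {t : ℕ} (ht : socleDeg h < t) : h t = 0 := by
  by_contra hc
  exact absurd (le_socle hh hc) (by omega)

lemma one_le_of_le_socle (hh : IsFiniteOSeq h) {t : ℕ} (ht : t ≤ socleDeg h) : 1 ≤ h t := by
  have := oseq_ne_zero_of_le hh (socle_ne_zero hh) ht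
  omega

lemma socle_lt_mult (hh : IsFiniteOSeq h) : socleDeg h < mult h := by
  obtain ⟨N, hN⟩ := hh.2.2.1
  set s := socleDeg h with hs
  have hsN : s < N := by
    by_contra hc
    exact socle_ne_zero hh (hN s (by omega))
  rw [mult_eq_sum hN]
  have h1 : ∀ t ∈ Finset.range (s+1), 1 ≤ h t := fun t htr =>
    one_le_of_le_socle hh (by simpa using Nat.lt_succ_iff.1 (Finset.mem_range.1 htr))
  calc s < s + 1 := by omega
    _ = ∑ t ∈ Finset.range (s+1), 1 := by simp
    _ ≤ ∑ t ∈ Finset.range (s+1), h t := Finset.sum_le_sum h1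
    _ ≤ ∑ t ∈ Finset.range N, h t :=
        Finset.sum_le_sum_of_subset (Finset.range_subset_range.2 (by omega))

lemma value_le_mult (hh : IsFiniteOSeq h) (t : ℕ) : h t ≤ mult h := by
  obtain ⟨N, hN⟩ := hh.2.2.1
  rw [mult_eq_sum hN]
  by_cases ht : t < N
  · exact Finset.single_le_sum (f := h) (fun _ _ => Nat.zero_le _) (Finset.mem_range.2 ht)
  · rw [hN t (by omega)]; exact Nat.zero_le _

lemma mult_pos (hh : IsFiniteOSeq h) : 1 ≤ mult h := by
  have h1 := value_le_mult hh 0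
  have h0 := hh.1
  omega

/-- upper bound by the maximal sequence with p = h 1 -/
lemma oseq_le_max (hh : IsFiniteOSeq h) (t : ℕ) : h t ≤ (h 1 - 1 + t).choose t := by
  induction t with
  | zero => simp [hh.1]
  | succ t ih =>
    rcases Nat.eq_zero_or_pos t with rfl | ht
    · simp only [Nat.zero_add, Nat.choose_one_right]
      have h0 : h 0 = 1 := hh.1
      omega
    · have h1 : h (t+1) ≤ macaulay (h t) t := hh.2.2.2 t ht
      have h2 : macaulay (h t) t ≤ macaulay ((h 1 - 1 + t).choose t) t :=
        macaulay_mono t _ _ ih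
      have h3 : macaulay ((h 1 - 1 + t).choose t) t = (h 1 - 1 + t + 1).choose (t+1) :=
        macaulay_choose ht (by omega)
      have he : h 1 - 1 + t + 1 = h 1 - 1 + (t+1) := by omega
      rw [he] at h3
      omega

/-- strict bound propagation -/
lemma oseq_lt_max_succ (hh : IsFiniteOSeq h) {q t : ℕ} (ht : 1 ≤ t)
    (hlt : h t < (q + t).choose t) : h (t+1) < (q + (t+1)).choose (t+1) := by
  have h1 : h (t+1) ≤ macaulay (h t) t := hh.2.2.2 t ht
  have h2 := macaulay_lt_choose t (h t) (q+t) (by omega) hlt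
  have he : q + t + 1 = q + (t+1) := by omega
  rw [he] at h2
  omega

lemma oseq_lt_max_of_lt (hh : IsFiniteOSeq h) {q m t : ℕ} (hm : 1 ≤ m) (hmt : m ≤ t)
    (hlt : h m < (q + m).choose m) : h t < (q + t).choose t := by
  induction t, hmt using Nat.le_induction with
  | base => exact hlt
  | succ n hn ih => exact oseq_lt_max_succ hh (by omega) ih

end OSeq

/-- The set of finite O-sequences with given multiplicity is finite. -/
lemma finite_oseq_mult (d : ℕ) : {h : ℕ → ℕ | IsFiniteOSeq h ∧ mult h = d}.Finite := by
  classical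
  have key : Set.InjOn (fun (h : ℕ → ℕ) => fun t : Fin (d+1) => (⟨min (h t) d, by omega⟩ : Fin (d+1)))
      {h : ℕ → ℕ | IsFiniteOSeq h ∧ mult h = d} := by
    intro h1 hm1 h2 hm2 heq
    simp only [Set.mem_setOf_eq] at hm1 hm2
    funext t
    by_cases ht : t < d + 1
    · have := congrFun heq ⟨t, ht⟩
      simp only [Fin.mk.injEq] at this
      have hv1 : h1 t ≤ d := hm1.2 ▸ value_le_mult hm1.1 t
      have hv2 : h2 t ≤ d := hm2.2 ▸ value_le_mult hm2.1 t
      omega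
    · have hs1 : socleDeg h1 < d := hm1.2 ▸ socle_lt_mult hm1.1
      have hs2 : socleDeg h2 < d := hm2.2 ▸ socle_lt_mult hm2.1
      rw [zero_of_socle_lt hm1.1 (by omega), zero_of_socle_lt hm2.1 (by omega)]
  exact Set.Finite.of_finite_image (Set.toFinite _) key

lemma ncard_prod_finite {α β : Type*} (s : Set α) (t : Set β) (hs : s.Finite) (ht : t.Finite) :
    (s ×ˢ t).ncard = s.ncard * t.ncard := by
  have : (s ×ˢ t : Set (α×β)) = ↑(hs.toFinset ×ˢ ht.toFinset) := by
    simp [Set.ext_iff]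
  rw [this, Set.ncard_coe_finset, Finset.card_product,
    Set.ncard_eq_toFinset_card _ hs, Set.ncard_eq_toFinset_card _ ht]
/-! ### Decomposition of O-sequences -/

noncomputable def iDeg (h : ℕ → ℕ) : ℕ := sSup {m | (h 1 - 2 + m).choose m ≤ h m}

noncomputable def gP (h : ℕ → ℕ) : ℕ → ℕ :=
  fun m => h (m+1) - (h 1 - 2 + (m+1)).choose (m+1)

noncomputable def fP (h : ℕ → ℕ) : ℕ → ℕ :=
  fun t => if t ≤ iDeg h then (h 1 - 2 + t).choose t else h t

noncomputable def kD (h : ℕ → ℕ) : ℕ :=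
  sSup {m | ∀ t, t ≤ m → gP h t = (h 1 - 1 + t).choose t}

def comb (f g : ℕ → ℕ) : ℕ → ℕ := fun t => match t with
  | 0 => f 0
  | m+1 => f (m+1) + g m

lemma comb_succ (f g : ℕ → ℕ) (m : ℕ) : comb f g (m+1) = f (m+1) + g m := rfl

/-- additivity of multiplicity under `comb` -/
lemma mult_comb {f g : ℕ → ℕ} {N : ℕ} (hfN : ∀ t, N ≤ t → f t = 0)
    (hgN : ∀ t, N ≤ t → g t = 0) : mult (comb f g) = mult f + mult g := by
  have hcN : ∀ t, N + 1 ≤ t → comb f g t = 0 := by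
    intro t ht
    obtain ⟨m, rfl⟩ : ∃ m, t = m + 1 := ⟨t - 1, by omega⟩
    rw [comb_succ, hfN _ (by omega), hgN _ (by omega)]
  rw [mult_eq_sum hcN, mult_eq_sum (h := f) (N := N+1) (fun t ht => hfN t (by omega)),
    mult_eq_sum hgN, Finset.sum_range_succ' (comb f g) N,
    Finset.sum_range_succ' f N]
  have : ∀ m ∈ Finset.range N, comb f g (m+1) = f (m+1) + g m := fun m _ => rfl
  rw [Finset.sum_congr rfl this, Finset.sum_add_distrib]
  have h0 : comb f g 0 = f 0 := rfl
  rw [h0]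
  ring

lemma sum_range_le_mult {h : ℕ → ℕ} (hh : IsFiniteOSeq h) (M : ℕ) :
    ∑ t ∈ Finset.range M, h t ≤ mult h := by
  obtain ⟨N, hN⟩ := hh.2.2.1
  have hN' : ∀ t, max N M ≤ t → h t = 0 := fun t ht => hN t (by omega)
  rw [mult_eq_sum hN']
  exact Finset.sum_le_sum_of_subset (Finset.range_subset_range.2 (by omega))

section Forward

variable {h : ℕ → ℕ} {r : ℕ}

/-- All the properties of the decomposition of an O-sequence `h` with `h 1 = r + 2`. -/
lemma forward (hh : IsFiniteOSeq h) (hp : h 1 = r + 2) :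
    (∀ m, m ≤ iDeg h → (r+m).choose m ≤ h m) ∧
    (∀ m, iDeg h < m → h m < (r+m).choose m) ∧
    1 ≤ iDeg h ∧ iDeg h + 2 ≤ mult h := by
  have hr2 : h 1 - 2 = r := by omega
  set I := {m | (h 1 - 2 + m).choose m ≤ h m} with hI
  have hIdeg : iDeg h = sSup I := rfl
  have hmemI : ∀ m, m ∈ I ↔ (r+m).choose m ≤ h m := by
    intro m; rw [hI]; simp [hr2]
  obtain ⟨N, hN⟩ := hh.2.2.1
  have hbdd : BddAbove I := by
    refine ⟨N, fun m hm => ?_⟩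
    rw [hmemI] at hm
    by_contra hc
    have h0 : h m = 0 := hN m (by omega)
    have hpos : 0 < (r+m).choose m := Nat.choose_pos (by omega)
    omega
  have h1I : 1 ∈ I := by
    rw [hmemI]
    simp only [Nat.choose_one_right]
    omega
  have hiI : iDeg h ∈ I := hIdeg ▸ Nat.sSup_mem ⟨1, h1I⟩ hbdd
  have hi1 : 1 ≤ iDeg h := hIdeg ▸ le_csSup hbdd h1I
  have hupper : ∀ m, iDeg h < m → h m < (r+m).choose m := by
    intro m hm
    by_contra hc
    have : m ∈ I := by rw [hmemI]; omega
    have := le_csSup hbdd this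
    rw [← hIdeg] at this
    omega
  have hlower : ∀ m, m ≤ iDeg h → (r+m).choose m ≤ h m := by
    intro m hm
    by_contra hc
    push_neg at hc
    have hm1 : 1 ≤ m := by
      by_contra h0
      have : m = 0 := by omega
      subst this
      simp [hh.1] at hc
    have := oseq_lt_max_of_lt hh (q := r) hm1 hm hc
    rw [hmemI] at hiI
    omega
  refine ⟨hlower, hupper, hi1, ?_⟩
  -- multiplicity bound
  have hsum : ∑ t ∈ Finset.range (iDeg h + 1), (1:ℕ) < ∑ t ∈ Finset.range (iDeg h + 1), h t := by
    apply Finset.sum_lt_sum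
    · intro t ht
      have := hlower t (by simpa using Nat.lt_succ_iff.1 (Finset.mem_range.1 ht))
      have hpos : 0 < (r+t).choose t := Nat.choose_pos (by omega)
      omega
    · exact ⟨1, Finset.mem_range.2 (by omega), by omega⟩
  have hle := sum_range_le_mult hh (iDeg h + 1)
  simp only [Finset.sum_const, Finset.card_range, smul_eq_mul, mul_one] at hsum
  omega

/-- Properties of the `g`-part. -/
lemma forward_g (hh : IsFiniteOSeq h) (hp : h 1 = r + 2) :
    gP h 0 = 1 ∧
    (∀ m, iDeg h ≤ m → gP h m = 0) ∧
    (∀ m, m + 1 ≤ iDeg h → h (m+1) = (r+(m+1)).choose (m+1) + gP h m) ∧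
    (∀ m, gP h m ≤ (r+1+m).choose m) ∧
    IsFiniteOSeq (gP h) := by
  obtain ⟨hlow, hupp, hi1, hmult⟩ := forward hh hp
  have hr2 : h 1 - 2 = r := by omega
  have hgdef : ∀ m, gP h m = h (m+1) - (r+(m+1)).choose (m+1) := by
    intro m; rw [gP, hr2]
  have hg0 : gP h 0 = 1 := by
    have h1 := hgdef 0
    norm_num [Nat.choose_one_right] at h1
    omega
  have hgz : ∀ m, iDeg h ≤ m → gP h m = 0 := by
    intro m hm
    rw [hgdef]
    have := hupp (m+1) (by omega)
    omega
  have hgd : ∀ m, m + 1 ≤ iDeg h → h (m+1) = (r+(m+1)).choose (m+1) + gP h m := by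
    intro m hm
    rw [hgdef]
    have := hlow (m+1) hm
    omega
  have hgmax : ∀ m, gP h m ≤ (r+1+m).choose m := by
    intro m
    rw [hgdef]
    have h1 := oseq_le_max hh (m+1)
    have he : h 1 - 1 + (m+1) = r + 1 + m + 1 := by omega
    rw [he] at h1
    have hps : (r+1+m+1).choose (m+1) = (r+1+m).choose m + (r+1+m).choose (m+1) :=
      pascal (r+1+m) m
    have he2 : (r+(m+1)).choose (m+1) = (r+1+m).choose (m+1) := by
      congr 1
      omega
    omega
  have hgprop : ∀ m, gP h m = 0 → gP h (m+1) = 0 := by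
    intro m hm
    rw [hgdef] at hm
    rw [show gP h (m+1) = h (m+2) - (r+(m+2)).choose (m+2) from hgdef (m+1)]
    have h1 : h (m+1) ≤ (r+(m+1)).choose (m+1) := by omega
    have h2 : h (m+2) ≤ macaulay (h (m+1)) (m+1) := hh.2.2.2 (m+1) (by omega)
    have h3 : macaulay (h (m+1)) (m+1) ≤ macaulay ((r+(m+1)).choose (m+1)) (m+1) :=
      macaulay_mono _ _ _ h1
    have h4 : macaulay ((r+(m+1)).choose (m+1)) (m+1) = (r+(m+1)+1).choose (m+2) :=
      macaulay_choose (by omega) (by omega)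
    have he : (r+(m+1)+1).choose (m+2) = (r+(m+2)).choose (m+2) := rfl
    omega
  refine ⟨hg0, hgz, hgd, hgmax, ?_⟩
  refine ⟨hg0, hgprop, ⟨iDeg h, hgz⟩, ?_⟩
  -- growth
  intro m hm
  by_cases h0 : gP h m = 0
  · rw [hgprop m h0, h0, macaulay_zero]
  · have hmi : m + 1 ≤ iDeg h := by
      by_contra hc
      exact h0 (hgz m (by omega))
    have hd1 : h (m+1) = (r+(m+1)).choose (m+1) + gP h m := hgd m hmi
    have hb : gP h m ≤ (r+m+1).choose m := by
      have := hgmax m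
      have he : (r+1+m).choose m = (r+m+1).choose m := by congr 1; omega
      omega
    have hkey : macaulay ((r+m+1).choose (m+1) + gP h m) (m+1)
        = (r+m+2).choose (m+2) + macaulay (gP h m) m := by
      have := macaulay_add_choose (m := r+m+1) (t := m+1) (b := gP h m)
        (by omega) (by omega) (by simpa using hb)
      simpa using this
    have h2 : h (m+2) ≤ macaulay (h (m+1)) (m+1) := hh.2.2.2 (m+1) (by omega)
    have he1 : (r+(m+1)).choose (m+1) = (r+m+1).choose (m+1) := rfl
    rw [he1] at hd1
    rw [hd1] at h2
    rw [hkey] at h2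
    have hgm2 : gP h (m+1) = h (m+2) - (r+(m+2)).choose (m+2) := hgdef (m+1)
    have he2 : (r+(m+2)).choose (m+2) = (r+m+2).choose (m+2) := rfl
    rw [he2] at hgm2
    omega

end Forward
section Forward2

variable {h : ℕ → ℕ} {r : ℕ}

lemma socle_le_of {f : ℕ → ℕ} (hf : f 0 = 1) {B : ℕ} (hb : ∀ t, f t ≠ 0 → t ≤ B) :
    socleDeg f ≤ B :=
  csSup_le ⟨0, by simp [hf]⟩ hb

lemma forward_k (hh : IsFiniteOSeq h) (hp : h 1 = r + 2) :
    (∀ t, t ≤ kD h → gP h t = (r+1+t).choose t) ∧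
    (∀ m, kD h < m → gP h m < (r+1+m).choose m) ∧
    kD h < iDeg h := by
  obtain ⟨hg0, hgz, hgd, hgmax, hgO⟩ := forward_g hh hp
  have hr1 : h 1 - 1 = r + 1 := by omega
  set K := {m | ∀ t, t ≤ m → gP h t = (h 1 - 1 + t).choose t} with hK
  have hKdeg : kD h = sSup K := rfl
  have hmemK : ∀ m, m ∈ K ↔ ∀ t, t ≤ m → gP h t = (r+1+t).choose t := by
    intro m; rw [hK]; simp [hr1]
  have h0K : 0 ∈ K := by
    rw [hmemK]
    intro t ht
    have : t = 0 := by omega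
    subst this
    simpa using hg0
  have hbdd : BddAbove K := by
    refine ⟨iDeg h, fun m hm => ?_⟩
    rw [hmemK] at hm
    have h1 := hm m le_rfl
    have hpos : 0 < (r+1+m).choose m := Nat.choose_pos (by omega)
    by_contra hc
    have := hgz m (by omega)
    omega
  have hkK : kD h ∈ K := hKdeg ▸ Nat.sSup_mem ⟨0, h0K⟩ hbdd
  rw [hmemK] at hkK
  have hki : kD h < iDeg h := by
    have h1 := hkK (kD h) le_rfl
    have hpos : 0 < (r+1+kD h).choose (kD h) := Nat.choose_pos (by omega)
    by_contra hc
    have := hgz (kD h) (by omega)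
    omega
  refine ⟨hkK, ?_, hki⟩
  -- strictness beyond kD h
  have hstep : gP h (kD h + 1) < (r+1+(kD h +1)).choose (kD h + 1) := by
    have hle : gP h (kD h + 1) ≤ (r+1+(kD h +1)).choose (kD h + 1) := hgmax _
    rcases Nat.eq_or_lt_of_le hle with heq | hlt
    · exfalso
      have : (kD h + 1) ∈ K := by
        rw [hmemK]
        intro t ht
        rcases Nat.lt_or_ge t (kD h + 1) with h1 | h1
        · exact hkK t (by omega)
        · have : t = kD h + 1 := by omega
          subst this
          exact heq
      have := le_csSup hbdd this
      rw [← hKdeg] at this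
      omega
    · exact hlt
  intro m hm
  exact oseq_lt_max_of_lt hgO (q := r+1) (by omega) (by omega) hstep

lemma forward_f (hh : IsFiniteOSeq h) (hp : h 1 = r + 2) :
    (∀ t, t ≤ iDeg h → fP h t = (r+t).choose t) ∧
    (∀ t, iDeg h < t → fP h t = h t) ∧
    IsFiniteOSeq (fP h) := by
  obtain ⟨hlow, hupp, hi1, hmult⟩ := forward hh hp
  have hr2 : h 1 - 2 = r := by omega
  have hfle : ∀ t, t ≤ iDeg h → fP h t = (r+t).choose t := by
    intro t ht
    rw [fP, if_pos ht, hr2]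
  have hfgt : ∀ t, iDeg h < t → fP h t = h t := by
    intro t ht
    rw [fP, if_neg (by omega)]
  refine ⟨hfle, hfgt, ?_, ?_, ?_, ?_⟩
  · rw [hfle 0 (by omega)]
    simp
  · -- zero propagation
    intro t ht
    have htI : iDeg h < t := by
      by_contra hc
      rw [hfle t (by omega)] at ht
      have : 0 < (r+t).choose t := Nat.choose_pos (by omega)
      omega
    rw [hfgt t htI] at ht
    rw [hfgt (t+1) (by omega)]
    exact hh.2.1 t ht
  · obtain ⟨N, hN⟩ := hh.2.2.1
    refine ⟨max N (iDeg h + 1), fun t ht => ?_⟩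
    rw [hfgt t (by omega)]
    exact hN t (by omega)
  · -- growth
    intro t ht
    rcases Nat.lt_or_ge (t+1) (iDeg h + 1) with hti | hti
    · -- t+1 ≤ iDeg h
      rw [hfle t (by omega), hfle (t+1) (by omega)]
      have := macaulay_choose (m := r + t) (s := t) ht (by omega)
      have he : (r+t+1).choose (t+1) = (r+(t+1)).choose (t+1) := rfl
      omega
    · rcases Nat.eq_or_lt_of_le hti with hte | hte
      · -- t = iDeg h
        have htei : t = iDeg h := by omega
        rw [hfle t (by omega), hfgt (t+1) (by omega)]
        have h1 : h (t+1) < (r+(t+1)).choose (t+1) := hupp (t+1) (by omega)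
        have h2 := macaulay_choose (m := r + t) (s := t) ht (by omega)
        have he : (r+t+1).choose (t+1) = (r+(t+1)).choose (t+1) := rfl
        omega
      · -- t > iDeg h
        rw [hfgt t (by omega), hfgt (t+1) (by omega)]
        exact hh.2.2.2 t ht

lemma forward_comb (hh : IsFiniteOSeq h) (hp : h 1 = r + 2) :
    h = comb (fP h) (gP h) := by
  obtain ⟨hlow, hupp, hi1, hmult⟩ := forward hh hp
  obtain ⟨hg0, hgz, hgd, hgmax, hgO⟩ := forward_g hh hp
  obtain ⟨hfle, hfgt, hfO⟩ := forward_f hh hp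
  funext t
  match t with
  | 0 =>
    show h 0 = fP h 0
    rw [hfle 0 (by omega)]
    simpa using hh.1
  | m+1 =>
    rw [comb_succ]
    rcases Nat.lt_or_ge (iDeg h) (m+1) with h1 | h1
    · rw [hfgt (m+1) h1, hgz m (by omega)]
      omega
    · rw [hfle (m+1) h1, hgd m h1]

end Forward2
section Backward

variable {f g : ℕ → ℕ} {r i k0 : ℕ}

lemma backward (hf : IsFiniteOSeq f) (hg : IsFiniteOSeq g)
    (hfle : ∀ t, t ≤ i → f t = (r+t).choose t)
    (hfgt : ∀ t, i < t → f t < (r+t).choose t)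
    (hgle : ∀ t, t ≤ k0 → g t = (r+1+t).choose t)
    (hggt : ∀ t, k0 < t → g t < (r+1+t).choose t)
    (hgz : ∀ m, i ≤ m → g m = 0)
    (hki : k0 < i) :
    IsFiniteOSeq (comb f g) ∧ comb f g 1 = r + 2 ∧
    iDeg (comb f g) = i ∧ fP (comb f g) = f ∧ gP (comb f g) = g ∧ kD (comb f g) = k0 := by
  have hi1 : 1 ≤ i := by omega
  have hgmax : ∀ m, g m ≤ (r+1+m).choose m := by
    intro m
    rcases Nat.lt_or_ge k0 m with hm | hm
    · exact le_of_lt (hggt m hm)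
    · exact le_of_eq (hgle m hm)
  have hfmax : ∀ t, f t ≤ (r+t).choose t := by
    intro t
    rcases Nat.lt_or_ge i t with hm | hm
    · exact le_of_lt (hfgt t hm)
    · exact le_of_eq (hfle t hm)
  have hc1 : comb f g 1 = r + 2 := by
    rw [comb_succ, hfle 1 hi1, hgle 0 (by omega)]
    simp [Nat.choose_one_right]
  -- O-sequence property
  have hOseq : IsFiniteOSeq (comb f g) := by
    refine ⟨hf.1, ?_, ?_, ?_⟩
    · intro t ht
      match t with
      | 0 =>
        exfalso
        have := hf.1
        exact absurd ht (by simp [comb, this])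
      | m+1 =>
        rw [comb_succ] at ht
        rw [comb_succ]
        rw [hf.2.1 (m+1) (by omega), hg.2.1 m (by omega)]
    · obtain ⟨N1, hN1⟩ := hf.2.2.1
      obtain ⟨N2, hN2⟩ := hg.2.2.1
      refine ⟨max N1 N2 + 1, fun t ht => ?_⟩
      obtain ⟨m, rfl⟩ : ∃ m, t = m + 1 := ⟨t - 1, by omega⟩
      rw [comb_succ, hN1 _ (by omega), hN2 _ (by omega)]
    · intro t ht
      obtain ⟨m, rfl⟩ : ∃ m, t = m + 1 := ⟨t - 1, by omega⟩
      rw [comb_succ, comb_succ]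
      rcases Nat.eq_zero_or_pos m with rfl | hm1
      · -- base case t = 1
        rw [hfle 1 hi1, hgle 0 (by omega)]
        have he1 : (r+1).choose 1 = r + 1 := Nat.choose_one_right _
        have he0 : (r+1+0).choose 0 = 1 := Nat.choose_zero_right _
        have hsum : (r+1).choose 1 + (r+1+0).choose 0 = (r+2).choose 1 := by
          rw [he1, he0, Nat.choose_one_right]
        rw [hsum]
        have hmac : macaulay ((r+2).choose 1) 1 = (r+3).choose 2 :=
          macaulay_choose (by omega) (by omega)
        have hps : (r+3).choose 2 = (r+2).choose 1 + (r+2).choose 2 := pascal (r+2) 1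
        have hmac' : macaulay ((r+2).choose 1) (0+1) = macaulay ((r+2).choose 1) 1 := rfl
        have hf2 : f (0+1+1) ≤ (r+2).choose 2 := by
          have := hfmax 2
          simpa using this
        have hg1 : g (0+1) ≤ (r+2).choose 1 := by
          have := hgmax 1
          have he : (r+1+1).choose 1 = (r+2).choose 1 := rfl
          simpa [he] using this
        have he2 : (r+2).choose 1 = r+2 := Nat.choose_one_right _
        omega
      · rcases Nat.lt_or_ge i (m+1) with him | him
        · -- m+1 > i : pure f regime
          rw [hgz m (by omega), hgz (m+1) (by omega)]
          simp only [Nat.add_zero]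
          exact hf.2.2.2 (m+1) (by omega)
        · -- m+1 ≤ i
          rw [hfle (m+1) him]
          have he1 : (r+(m+1)).choose (m+1) = (r+m+1).choose (m+1) := rfl
          rw [he1]
          have hb : g m ≤ (r+m+1).choose m := by
            have := hgmax m
            have he : r + 1 + m = r + m + 1 := by omega
            rw [he] at this
            exact this
          have hkey : macaulay ((r+m+1).choose (m+1) + g m) (m+1)
              = (r+m+2).choose (m+2) + macaulay (g m) m := by
            have := macaulay_add_choose (m := r+m+1) (t := m+1) (b := g m)
              (by omega) (by omega) (by simpa using hb)
            simpa using this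
          rw [hkey]
          have hgrow : g (m+1) ≤ macaulay (g m) m := hg.2.2.2 m hm1
          have hfb : f (m+1+1) ≤ (r+(m+2)).choose (m+2) := hfmax (m+2)
          have he2 : (r+(m+2)).choose (m+2) = (r+m+2).choose (m+2) := rfl
          omega
  -- h 1 - 2 = r
  have hr2 : comb f g 1 - 2 = r := by omega
  have hr1 : comb f g 1 - 1 = r + 1 := by omega
  -- iDeg
  have hcomb_ge : ∀ m, m ≤ i → (r+m).choose m ≤ comb f g m := by
    intro m hm
    match m with
    | 0 => simp [comb, hf.1]
    | n+1 =>
      rw [comb_succ, hfle (n+1) hm]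
      omega
  have hcomb_lt : ∀ m, i < m → comb f g m < (r+m).choose m := by
    intro m hm
    obtain ⟨n, rfl⟩ : ∃ n, m = n + 1 := ⟨m - 1, by omega⟩
    rw [comb_succ, hgz n (by omega)]
    have := hfgt (n+1) hm
    omega
  have hiDeg : iDeg (comb f g) = i := by
    have hIset : {m | (comb f g 1 - 2 + m).choose m ≤ comb f g m}
        = {m | (r + m).choose m ≤ comb f g m} := by
      ext m; rw [hr2]
    rw [iDeg, hIset]
    have hbdd : BddAbove {m | (r + m).choose m ≤ comb f g m} := by
      refine ⟨i, fun m hm => ?_⟩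
      simp only [Set.mem_setOf_eq] at hm
      by_contra hc
      have := hcomb_lt m (by omega)
      omega
    apply le_antisymm
    · exact csSup_le ⟨i, hcomb_ge i le_rfl⟩ (fun m hm => by
        simp only [Set.mem_setOf_eq] at hm
        by_contra hc
        have := hcomb_lt m (by omega)
        omega)
    · exact le_csSup hbdd (hcomb_ge i le_rfl)
  -- gP
  have hgP : gP (comb f g) = g := by
    funext m
    rw [gP, hr2, comb_succ]
    rcases Nat.lt_or_ge i (m+1) with him | him
    · rw [hgz m (by omega)]
      have := hfgt (m+1) him
      omega
    · rw [hfle (m+1) him]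
      omega
  -- fP
  have hfP : fP (comb f g) = f := by
    funext t
    rw [fP, hiDeg, hr2]
    rcases Nat.lt_or_ge i t with him | him
    · rw [if_neg (by omega)]
      obtain ⟨n, rfl⟩ : ∃ n, t = n + 1 := ⟨t - 1, by omega⟩
      rw [comb_succ, hgz n (by omega)]
      omega
    · rw [if_pos him, hfle t him]
  -- kD
  have hkD : kD (comb f g) = k0 := by
    have hKset : {m | ∀ t, t ≤ m → gP (comb f g) t = (comb f g 1 - 1 + t).choose t}
        = {m | ∀ t, t ≤ m → g t = (r + 1 + t).choose t} := by
      ext m; rw [hgP, hr1]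
    rw [kD, hKset]
    have hbdd : BddAbove {m | ∀ t, t ≤ m → g t = (r + 1 + t).choose t} := by
      refine ⟨k0, fun m hm => ?_⟩
      simp only [Set.mem_setOf_eq] at hm
      by_contra hc
      have := hggt m (by omega)
      have := hm m le_rfl
      omega
    apply le_antisymm
    · exact csSup_le ⟨k0, fun t ht => hgle t ht⟩ (fun m hm => by
        simp only [Set.mem_setOf_eq] at hm
        by_contra hc
        have := hggt m (by omega)
        have := hm m le_rfl
        omega)
    · exact le_csSup hbdd (fun t ht => hgle t ht)
  exact ⟨hOseq, hc1, hiDeg, hfP, hgP, hkD⟩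

end Backward
/-! ### Counting -/

def OSet (p n k dd : ℕ) : Set (ℕ → ℕ) :=
  {h | IsFiniteOSeq h ∧ mult h = dd ∧ socleDeg h ≤ n ∧
    (∀ m : ℕ, m ≤ k → h m = (p - 1 + m).choose m) ∧
    (∀ m : ℕ, k < m → h m < (p - 1 + m).choose m)}

lemma OSet_finite (p n k dd : ℕ) : (OSet p n k dd).Finite :=
  (finite_oseq_mult dd).subset (fun h hh => ⟨hh.1, hh.2.1⟩)

lemma countO_eq (p n k dd : ℕ) (hp : 1 ≤ p) (hd : 1 ≤ dd) :
    countO (p:ℤ) (n:ℤ) (k:ℤ) (dd:ℤ) = (OSet p n k dd).ncard := by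
  rw [countO, if_pos]
  · congr 1
    ext h
    simp only [Set.mem_setOf_eq, OSet, Int.toNat_natCast, Nat.cast_le, Nat.cast_lt]
  · refine ⟨by exact_mod_cast hp, by positivity, by positivity, by exact_mod_cast hd⟩

lemma cast_sum_Icc {aZ bZ : ℤ} (a b : ℕ) (F : ℤ → ℕ) (ha : aZ = a) (hb : bZ = b) :
    ∑ x ∈ Finset.Icc aZ bZ, F x = ∑ x ∈ Finset.Icc a b, F (x:ℤ) := by
  subst ha hb
  refine Finset.sum_nbij' (fun x => x.toNat) (fun x => (x:ℤ)) ?_ ?_ ?_ ?_ ?_ <;>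
      intro x hx <;> simp only [Finset.mem_Icc] at *
  · omega
  · omega
  · omega
  · omega
  · congr 1
    omega

lemma ncard_biUnion {ι α : Type*} (s : Finset ι) (T : ι → Set α)
    (hfin : ∀ i ∈ s, (T i).Finite)
    (hdisj : ∀ i ∈ s, ∀ j ∈ s, i ≠ j → Disjoint (T i) (T j)) :
    (⋃ i ∈ s, T i).ncard = ∑ i ∈ s, (T i).ncard := by
  classical
  induction s using Finset.induction_on with
  | empty => simp
  | @insert a s' ha ih =>
    rw [Finset.sum_insert ha]
    have hU : (⋃ i ∈ insert a s', T i) = T a ∪ ⋃ i ∈ s', T i := by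
      simp [Set.biUnion_insert]
    rw [hU]
    have hfin' : (⋃ i ∈ s', T i).Finite :=
      Set.Finite.biUnion s'.finite_toSet (fun i hi => hfin i (Finset.mem_insert_of_mem hi))
    have hdisj' : Disjoint (T a) (⋃ i ∈ s', T i) := by
      rw [Set.disjoint_iUnion_right]
      intro i
      rw [Set.disjoint_iUnion_right]
      intro hi
      exact hdisj a (Finset.mem_insert_self a s') i (Finset.mem_insert_of_mem hi)
        (fun he => ha (he ▸ hi))
    rw [Set.ncard_union_eq hdisj' (hfin a (Finset.mem_insert_self a s')) hfin',
      ih (fun i hi => hfin i (Finset.mem_insert_of_mem hi))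
        (fun i hi j hj hij => hdisj i (Finset.mem_insert_of_mem hi) j
          (Finset.mem_insert_of_mem hj) hij)]
def Tset (d : ℕ) (q : ℕ × ℕ × ℕ × ℕ) : Set (ℕ → ℕ) :=
  {h | (IsFiniteOSeq h ∧ mult h = d ∧ 2 ≤ h 1) ∧
    h 1 = d - q.1 ∧ kD h + 1 = q.2.1 ∧ iDeg h = q.2.2.1 ∧ mult (gP h) = q.2.2.2}

lemma mult_split {h : ℕ → ℕ} {r : ℕ} (hh : IsFiniteOSeq h) (hp : h 1 = r + 2) :
    mult h = mult (fP h) + mult (gP h) := by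
  obtain ⟨N1, hN1⟩ := (forward_f hh hp).2.2.2.2.1
  obtain ⟨N2, hN2⟩ := (forward_g hh hp).2.2.2.2.2.2.1
  have := mult_comb (f := fP h) (g := gP h) (N := max N1 N2)
    (fun t ht => hN1 t (by omega)) (fun t ht => hN2 t (by omega))
  rw [← forward_comb hh hp] at this
  exact this

lemma forward_mem {d : ℕ} (hd : 2 < d) {h : ℕ → ℕ} (hh : IsFiniteOSeq h)
    (hm : mult h = d) (hp2 : 2 ≤ h 1) :
    ∃ ℓ k i j : ℕ, 1 ≤ ℓ ∧ ℓ ≤ d - 2 ∧ 1 ≤ k ∧ k ≤ d - 2 ∧ k ≤ i ∧ i ≤ d - 2 ∧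
      1 ≤ j ∧ j ≤ d - 2 ∧ h ∈ Tset d (ℓ, k, i, j) := by
  obtain ⟨r, hp⟩ : ∃ r, h 1 = r + 2 := ⟨h 1 - 2, by omega⟩
  obtain ⟨hlow, hupp, hi1, hmub⟩ := forward hh hp
  obtain ⟨hg0, hgz, hgd, hgmax, hgO⟩ := forward_g hh hp
  obtain ⟨hkle, hkgt, hki⟩ := forward_k hh hp
  obtain ⟨hfle, hfgt, hfO⟩ := forward_f hh hp
  -- h 1 ≤ d - 1
  have hsum2 : h 0 + h 1 ≤ mult h := by
    have h1 := sum_range_le_mult hh 2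
    have h2 : ∑ t ∈ Finset.range 2, h t = h 0 + h 1 := by
      rw [Finset.sum_range_succ, Finset.sum_range_one]
    omega
  have h0 : h 0 = 1 := hh.1
  have hub : h 1 ≤ d - 1 := by omega
  -- mult decomposition
  have hsplit : mult h = mult (fP h) + mult (gP h) := mult_split hh hp
  -- mult fP ≥ 2
  have hf0 : fP h 0 = 1 := by
    rw [hfle 0 (by omega)]
    simp
  have hf1 : fP h 1 = r + 1 := by
    rw [hfle 1 hi1]
    simp [Nat.choose_one_right]
  have hmf2 : 2 ≤ mult (fP h) := by
    have h1 := sum_range_le_mult hfO 2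
    have h2 : ∑ t ∈ Finset.range 2, fP h t = fP h 0 + fP h 1 := by
      rw [Finset.sum_range_succ, Finset.sum_range_one]
    omega
  have hmg1 : 1 ≤ mult (gP h) := mult_pos hgO
  -- kD h ≤ socleDeg gP h < mult gP h
  have hkd_socle : kD h ≤ socleDeg (gP h) := by
    apply le_socle hgO
    rw [hkle (kD h) le_rfl]
    have : 0 < (r+1+kD h).choose (kD h) := Nat.choose_pos (by omega)
    omega
  have hsm := socle_lt_mult hgO
  refine ⟨d - h 1, kD h + 1, iDeg h, mult (gP h), by omega, by omega, by omega, by omega,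
    by omega, by omega, by omega, by omega, ?_⟩
  exact ⟨⟨hh, hm, hp2⟩, by omega, rfl, rfl, rfl⟩

lemma product_mem {d ℓ k i j : ℕ} (hd2 : 2 ≤ d) (hℓ2 : ℓ ≤ d-2)
    (hk1 : 1 ≤ k) (hki : k ≤ i) (hj2 : j ≤ d-2)
    {f g : ℕ → ℕ} (hfm : f ∈ OSet (d-ℓ-1) (d-1) i (d-j)) (hgm : g ∈ OSet (d-ℓ) (i-1) (k-1) j) :
    IsFiniteOSeq (comb f g) ∧ comb f g 1 = (d - ℓ - 2) + 2 ∧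
    iDeg (comb f g) = i ∧ fP (comb f g) = f ∧ gP (comb f g) = g ∧ kD (comb f g) = k - 1 ∧
    mult (comb f g) = d := by
  obtain ⟨hfO, hfmu, hfs, hfle, hfgt⟩ := hfm
  obtain ⟨hgO, hgmu, hgs, hgle, hggt⟩ := hgm
  have e1 : d - ℓ - 1 - 1 = d - ℓ - 2 := by omega
  have e2 : d - ℓ - 1 = d - ℓ - 2 + 1 := by omega
  simp only [e1] at hfle hfgt
  simp only [e2] at hgle hggt
  have hi1 : 1 ≤ i := by omega
  have hgz : ∀ m, i ≤ m → g m = 0 := by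
    intro m hm
    exact zero_of_socle_lt hgO (by omega)
  have hb := backward hfO hgO hfle hfgt
    (by intro t ht; rw [hgle t ht])
    (by intro t ht; exact hggt t ht)
    hgz (by omega)
  obtain ⟨N1, hN1⟩ := hfO.2.2.1
  obtain ⟨N2, hN2⟩ := hgO.2.2.1
  have hmc : mult (comb f g) = mult f + mult g :=
    mult_comb (N := max N1 N2) (fun t ht => hN1 t (by omega)) (fun t ht => hN2 t (by omega))
  exact ⟨hb.1, hb.2.1, hb.2.2.1, hb.2.2.2.1, hb.2.2.2.2.1, hb.2.2.2.2.2, by omega⟩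

lemma Tq_image {d ℓ k i j : ℕ} (hd : 2 < d) (hℓ1 : 1 ≤ ℓ) (hℓ2 : ℓ ≤ d-2)
    (hk1 : 1 ≤ k) (hki : k ≤ i) (hi2 : i ≤ d-2) (hj1 : 1 ≤ j) (hj2 : j ≤ d-2) :
    Tset d (ℓ, k, i, j) =
      (fun fg : (ℕ→ℕ) × (ℕ→ℕ) => comb fg.1 fg.2) ''
        (OSet (d-ℓ-1) (d-1) i (d-j) ×ˢ OSet (d-ℓ) (i-1) (k-1) j) := by
  ext h
  constructor
  · rintro ⟨⟨hh, hm, hp2⟩, h1v, hkv, hiv, hjv⟩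
    simp only at h1v hkv hiv hjv
    subst hkv
    subst hiv
    subst hjv
    have hp : h 1 = (d - ℓ - 2) + 2 := by omega
    set r := d - ℓ - 2 with hr
    obtain ⟨hlow, hupp, hi1, hmub⟩ := forward hh hp
    obtain ⟨hg0, hgz, hgd, hgmax, hgO⟩ := forward_g hh hp
    obtain ⟨hkle, hkgt, hkiD⟩ := forward_k hh hp
    obtain ⟨hfle, hfgt, hfO⟩ := forward_f hh hp
    have hsplit := mult_split hh hp
    have hsh := socle_lt_mult hh
    have hfmem : fP h ∈ OSet (d-ℓ-1) (d-1) (iDeg h) (d - mult (gP h)) := by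
      refine ⟨hfO, by omega, ?_, ?_, ?_⟩
      · -- socleDeg fP ≤ d - 1
        apply socle_le_of (by rw [hfle 0 (by omega)]; simp)
        intro t ht
        rcases Nat.lt_or_ge (iDeg h) t with h1 | h1
        · rw [hfgt t h1] at ht
          have := le_socle hh ht
          omega
        · omega
      · intro m hmi
        rw [show d - ℓ - 1 - 1 + m = r + m from by omega]
        exact hfle m hmi
      · intro m hmi
        rw [hfgt m hmi]
        have := hupp m hmi
        have e : d - ℓ - 1 - 1 + m = r + m := by omega
        rw [e]
        exact this
    have hgmem : gP h ∈ OSet (d-ℓ) (iDeg h - 1) (kD h + 1 - 1) (mult (gP h)) := by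
      refine ⟨hgO, rfl, ?_, ?_, ?_⟩
      · apply socle_le_of hg0
        intro t ht
        have : t < iDeg h := by
          by_contra hc
          exact ht (hgz t (by omega))
        omega
      · intro m hmk
        rw [show d - ℓ - 1 + m = r + 1 + m from by omega]
        exact hkle m (by omega)
      · intro m hmk
        have := hkgt m (by omega)
        have e : d - ℓ - 1 + m = r + 1 + m := by omega
        rw [e]
        exact this
    exact ⟨(fP h, gP h), Set.mem_prod.2 ⟨hfmem, hgmem⟩, (forward_comb hh hp).symm⟩
  · rintro ⟨⟨f, g⟩, hfg, rfl⟩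
    have hfg1 : f ∈ OSet (d-ℓ-1) (d-1) i (d-j) := hfg.1
    have hfg2 : g ∈ OSet (d-ℓ) (i-1) (k-1) j := hfg.2
    obtain ⟨hO, h1v, hiD, hfP, hgP, hkDv, hmu⟩ := product_mem (by omega) hℓ2 hk1 hki hj2 hfg1 hfg2
    show comb f g ∈ Tset d (ℓ, k, i, j)
    refine ⟨⟨hO, hmu, by omega⟩, by show comb f g 1 = d - ℓ; omega,
      by show kD (comb f g) + 1 = k; omega, by show iDeg (comb f g) = i; exact hiD, ?_⟩
    show mult (gP (comb f g)) = j
    rw [hgP]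
    exact hfg2.2.1

lemma Tq_empty {d ℓ k i j : ℕ} (hik : ¬ k ≤ i) : Tset d (ℓ, k, i, j) = ∅ := by
  ext h
  simp only [Tset, Set.mem_setOf_eq, Set.mem_empty_iff_false, iff_false]
  rintro ⟨⟨hh, hm, hp2⟩, h1v, hkv, hiv, hjv⟩
  have hp : h 1 = (h 1 - 2) + 2 := by omega
  have := (forward_k hh hp).2.2
  omega

lemma Tq_card {d ℓ k i j : ℕ} (hd : 2 < d) (hℓ1 : 1 ≤ ℓ) (hℓ2 : ℓ ≤ d-2)
    (hk1 : 1 ≤ k) (hki : k ≤ i) (hi2 : i ≤ d-2) (hj1 : 1 ≤ j) (hj2 : j ≤ d-2) :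
    (Tset d (ℓ, k, i, j)).ncard
      = (OSet (d-ℓ-1) (d-1) i (d-j)).ncard * (OSet (d-ℓ) (i-1) (k-1) j).ncard := by
  rw [Tq_image hd hℓ1 hℓ2 hk1 hki hi2 hj1 hj2]
  rw [Set.ncard_image_of_injOn, ncard_prod_finite _ _ (OSet_finite _ _ _ _) (OSet_finite _ _ _ _)]
  intro fg1 h1 fg2 h2 he
  have hf1 : fg1.1 ∈ OSet (d-ℓ-1) (d-1) i (d-j) := h1.1
  have hg1 : fg1.2 ∈ OSet (d-ℓ) (i-1) (k-1) j := h1.2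
  have hf2 : fg2.1 ∈ OSet (d-ℓ-1) (d-1) i (d-j) := h2.1
  have hg2 : fg2.2 ∈ OSet (d-ℓ) (i-1) (k-1) j := h2.2
  obtain ⟨_, _, _, hfP1, hgP1, _, _⟩ := product_mem (by omega) hℓ2 hk1 hki hj2 hf1 hg1
  obtain ⟨_, _, _, hfP2, hgP2, _, _⟩ := product_mem (by omega) hℓ2 hk1 hki hj2 hf2 hg2
  have : comb fg1.1 fg1.2 = comb fg2.1 fg2.2 := he
  ext1
  · rw [← hfP1, ← hfP2, this]
  · rw [← hgP1, ← hgP2, this]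
lemma ones_lemma (d : ℕ) (hd : 2 < d) :
    {h : ℕ → ℕ | IsFiniteOSeq h ∧ mult h = d ∧ h 1 < 2}
      = {fun t => if t < d then 1 else 0} := by
  ext h
  simp only [Set.mem_setOf_eq, Set.mem_singleton_iff]
  constructor
  · rintro ⟨hh, hm, hp⟩
    have h0 : h 0 = 1 := hh.1
    have h1 : h 1 = 1 := by
      rcases Nat.lt_or_ge (h 1) 1 with h1 | h1
      · exfalso
        have h1z : h 1 = 0 := by omega
        have : mult h = 1 := by
          rw [mult_eq_sum (N := 1) (fun t ht => oseq_zero_of_le hh h1z ht)]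
          simp [h0]
        omega
      · omega
    have hub : ∀ t, h t ≤ 1 := by
      intro t
      have := oseq_le_max hh t
      rw [h1] at this
      norm_num at this
      simpa [Nat.choose_self] using this
    have hs1 : ∀ t, t ≤ socleDeg h → h t = 1 := by
      intro t ht
      have := one_le_of_le_socle hh ht
      have := hub t
      omega
    have hmult : mult h = socleDeg h + 1 := by
      rw [mult_eq_sum (N := socleDeg h + 1) (fun t ht => zero_of_socle_lt hh (by omega))]
      rw [Finset.sum_congr rfl (fun t htm => hs1 t (by
        have := Finset.mem_range.1 htm; omega))]
      simp
    funext t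
    by_cases htd : t < d
    · simp only [if_pos htd]
      exact hs1 t (by omega)
    · simp only [if_neg htd]
      exact zero_of_socle_lt hh (by omega)
  · rintro rfl
    refine ⟨⟨by show (if 0 < d then 1 else 0) = 1; rw [if_pos (by omega : (0:ℕ) < d)], ?_, ⟨d, fun t ht => by simp; omega⟩, ?_⟩, ?_, by show (if 1 < d then 1 else 0) < 2; split <;> omega⟩
    · intro t ht
      simp only [ite_eq_right_iff] at ht ⊢
      intro ht1
      exfalso
      exact absurd (ht (by omega)) (by omega)
    · intro t ht
      by_cases h2 : t + 1 < d
      · have h3 : t < d := by omega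
        simp only [if_pos h2, if_pos h3, macaulay_one ht]
        omega
      · simp only [if_neg h2]
        exact Nat.zero_le _
    · rw [mult_eq_sum (N := d) (fun t ht => by simp; omega)]
      rw [Finset.sum_congr rfl (fun t htm => if_pos (Finset.mem_range.1 htm))]
      simp

lemma rhs_eq (d : ℕ) (hd : 2 < d) :
    (∑ ℓ ∈ Finset.Icc (1 : ℤ) ((d : ℤ) - 2), ∑ k ∈ Finset.Icc (1 : ℤ) ((d : ℤ) - 2),
        ∑ i ∈ Finset.Icc k ((d : ℤ) - 2), ∑ j ∈ Finset.Icc (1 : ℤ) ((d : ℤ) - 2),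
          countO ((d : ℤ) - ℓ - 1) ((d : ℤ) - 1) i ((d : ℤ) - j) *
            countO ((d : ℤ) - ℓ) (i - 1) (k - 1) j)
    = ∑ ℓ ∈ Finset.Icc 1 (d-2), ∑ k ∈ Finset.Icc 1 (d-2), ∑ i ∈ Finset.Icc 1 (d-2),
        ∑ j ∈ Finset.Icc 1 (d-2), (if k ≤ i then
          (OSet (d-ℓ-1) (d-1) i (d-j)).ncard * (OSet (d-ℓ) (i-1) (k-1) j).ncard else 0) := by
  rw [cast_sum_Icc 1 (d-2) _ (by norm_num) (by push_cast; omega)]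
  refine Finset.sum_congr rfl fun ℓ hℓ => ?_
  simp only [Finset.mem_Icc] at hℓ
  rw [cast_sum_Icc 1 (d-2) _ (by norm_num) (by push_cast; omega)]
  refine Finset.sum_congr rfl fun k hk => ?_
  simp only [Finset.mem_Icc] at hk
  rw [cast_sum_Icc k (d-2) _ rfl (by push_cast; omega)]
  rw [show Finset.Icc k (d-2) = (Finset.Icc 1 (d-2)).filter (fun i => k ≤ i) from by
    ext x
    simp only [Finset.mem_Icc, Finset.mem_filter]
    omega]
  rw [Finset.sum_filter]
  refine Finset.sum_congr rfl fun i hi => ?_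
  simp only [Finset.mem_Icc] at hi
  by_cases hki : k ≤ i
  · rw [if_pos hki]
    rw [cast_sum_Icc 1 (d-2) _ (by norm_num) (by push_cast; omega)]
    refine Finset.sum_congr rfl fun j hj => ?_
    simp only [Finset.mem_Icc] at hj
    rw [if_pos hki]
    rw [show (d:ℤ) - ℓ - 1 = ((d-ℓ-1:ℕ):ℤ) from by push_cast; omega,
      show (d:ℤ) - 1 = ((d-1:ℕ):ℤ) from by push_cast; omega,
      show (d:ℤ) - j = ((d-j:ℕ):ℤ) from by push_cast; omega,
      show (d:ℤ) - ℓ = ((d-ℓ:ℕ):ℤ) from by push_cast; omega,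
      show (i:ℤ) - 1 = ((i-1:ℕ):ℤ) from by push_cast; omega,
      show (k:ℤ) - 1 = ((k-1:ℕ):ℤ) from by push_cast; omega,
      countO_eq _ _ _ _ (by omega) (by omega), countO_eq _ _ _ _ (by omega) (by omega)]
  · rw [if_neg hki]
    simp [hki]

end StmtAux

open StmtAux

/-- For every integer `d > 2`,
`O_d = 1 + Σ_{ℓ=1}^{d−2} Σ_{k=1}^{d−2} Σ_{i=k}^{d−2} Σ_{j=1}^{d−2}
O(d−ℓ−1, d−1, i, d−j) · O(d−ℓ, i−1, k−1, j)`. -/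
theorem stmt9 (d : ℕ) (hd : 2 < d) :
    countOd d =
      1 + ∑ ℓ ∈ Finset.Icc (1 : ℤ) ((d : ℤ) - 2), ∑ k ∈ Finset.Icc (1 : ℤ) ((d : ℤ) - 2),
          ∑ i ∈ Finset.Icc k ((d : ℤ) - 2), ∑ j ∈ Finset.Icc (1 : ℤ) ((d : ℤ) - 2),
            countO ((d : ℤ) - ℓ - 1) ((d : ℤ) - 1) i ((d : ℤ) - j) *
              countO ((d : ℤ) - ℓ) (i - 1) (k - 1) j := by 
  classical
  rw [rhs_eq d hd]
  set S1 : Set (ℕ → ℕ) := {h | IsFiniteOSeq h ∧ mult h = d ∧ h 1 < 2} with hS1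
  set S2 : Set (ℕ → ℕ) := {h | IsFiniteOSeq h ∧ mult h = d ∧ 2 ≤ h 1} with hS2
  have hsplit : {h : ℕ → ℕ | IsFiniteOSeq h ∧ mult h = d} = S1 ∪ S2 := by
    ext h
    simp only [hS1, hS2, Set.mem_setOf_eq, Set.mem_union]
    constructor
    · rintro ⟨h1, h2⟩
      rcases Nat.lt_or_ge (h 1) 2 with hc | hc
      · exact Or.inl ⟨h1, h2, hc⟩
      · exact Or.inr ⟨h1, h2, hc⟩
    · rintro (⟨h1, h2, _⟩ | ⟨h1, h2, _⟩) <;> exact ⟨h1, h2⟩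
  have hfin1 : S1.Finite := (finite_oseq_mult d).subset (fun h hh => ⟨hh.1, hh.2.1⟩)
  have hfin2 : S2.Finite := (finite_oseq_mult d).subset (fun h hh => ⟨hh.1, hh.2.1⟩)
  have hdisj : Disjoint S1 S2 := by
    rw [Set.disjoint_left]
    rintro h ⟨_, _, hlt⟩ ⟨_, _, hge⟩
    omega
  have hcard1 : S1.ncard = 1 := by
    rw [hS1, ones_lemma d hd, Set.ncard_singleton]
  set Q4 : Finset (ℕ × ℕ × ℕ × ℕ) :=
    (Finset.Icc 1 (d-2)) ×ˢ ((Finset.Icc 1 (d-2)) ×ˢ ((Finset.Icc 1 (d-2)) ×ˢ (Finset.Icc 1 (d-2)))) with hQ4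
  have hmemQ4 : ∀ q : ℕ × ℕ × ℕ × ℕ, q ∈ Q4 ↔
      (1 ≤ q.1 ∧ q.1 ≤ d-2) ∧ (1 ≤ q.2.1 ∧ q.2.1 ≤ d-2) ∧ (1 ≤ q.2.2.1 ∧ q.2.2.1 ≤ d-2) ∧
      (1 ≤ q.2.2.2 ∧ q.2.2.2 ≤ d-2) := by
    intro q
    simp [hQ4, Finset.mem_product, Finset.mem_Icc]
  have hcover : S2 = ⋃ q ∈ Q4, Tset d q := by
    ext h
    simp only [Set.mem_iUnion]
    constructor
    · rintro ⟨hh, hm, hp2⟩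
      obtain ⟨ℓ, k, i, j, hl1, hl2, hk1, hk2, hki, hi2, hj1, hj2, hmem⟩ :=
        forward_mem hd hh hm hp2
      exact ⟨(ℓ, k, i, j), (hmemQ4 _).2 ⟨⟨hl1, hl2⟩, ⟨hk1, hk2⟩, ⟨le_trans hk1 hki, hi2⟩, ⟨hj1, hj2⟩⟩,
        hmem⟩
    · rintro ⟨q, hq, hmem⟩
      exact hmem.1
  have hdisjT : ∀ p ∈ Q4, ∀ q ∈ Q4, p ≠ q → Disjoint (Tset d p) (Tset d q) := by
    intro p hp q hq hpq
    rw [Set.disjoint_left]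
    rintro h ⟨⟨hh, hm, hp2⟩, e1, e2, e3, e4⟩ ⟨_, f1, f2, f3, f4⟩
    apply hpq
    rw [hmemQ4] at hp hq
    obtain ⟨p1, p2, p3, p4⟩ := p
    obtain ⟨q1, q2, q3, q4⟩ := q
    simp only at e1 e2 e3 e4 f1 f2 f3 f4 hp hq
    simp only [Prod.mk.injEq]
    omega
  have hcard2 : S2.ncard = ∑ q ∈ Q4, (Tset d q).ncard := by
    rw [hcover]
    exact ncard_biUnion Q4 _
      (fun q hq => (finite_oseq_mult d).subset (fun h hh => ⟨hh.1.1, hh.1.2.1⟩)) hdisjT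
  have hGT : ∀ q ∈ Q4, (Tset d q).ncard = (if q.2.1 ≤ q.2.2.1 then
      (OSet (d-q.1-1) (d-1) q.2.2.1 (d-q.2.2.2)).ncard *
        (OSet (d-q.1) (q.2.2.1-1) (q.2.1-1) q.2.2.2).ncard else 0) := by
    intro q hq
    rw [hmemQ4] at hq
    obtain ⟨ℓ, k, i, j⟩ := q
    simp only at hq ⊢
    by_cases hki : k ≤ i
    · rw [if_pos hki]
      exact Tq_card hd hq.1.1 hq.1.2 hq.2.1.1 hki hq.2.2.1.2 hq.2.2.2.1 hq.2.2.2.2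
    · rw [if_neg hki, Tq_empty hki]
      simp
  have hnest : (∑ q ∈ Q4, (if q.2.1 ≤ q.2.2.1 then
      (OSet (d-q.1-1) (d-1) q.2.2.1 (d-q.2.2.2)).ncard *
        (OSet (d-q.1) (q.2.2.1-1) (q.2.1-1) q.2.2.2).ncard else 0))
      = ∑ ℓ ∈ Finset.Icc 1 (d-2), ∑ k ∈ Finset.Icc 1 (d-2), ∑ i ∈ Finset.Icc 1 (d-2),
        ∑ j ∈ Finset.Icc 1 (d-2), (if k ≤ i then
          (OSet (d-ℓ-1) (d-1) i (d-j)).ncard * (OSet (d-ℓ) (i-1) (k-1) j).ncard else 0) := by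
    rw [hQ4, Finset.sum_product]
    refine Finset.sum_congr rfl fun ℓ _ => ?_
    rw [Finset.sum_product]
    refine Finset.sum_congr rfl fun k _ => ?_
    rw [Finset.sum_product]
  rw [countOd, hsplit, Set.ncard_union_eq hdisj hfin1 hfin2, hcard1, hcard2,
    Finset.sum_congr rfl hGT, hnest]
end
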